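/- arXiv:0910.1687 — 11 statements merged into one kernel-verified Lean document; each statement's English description precedes it below -/
import Mathlib

section
/- Every negative rational loop g in GL(n,ℂ) can be written as a finite product of simple elements of the two types p_{α,β,V,W} and m_{α,k,N}. -/
set_option synthInstance.maxHeartbeats 1000000
set_option maxHeartbeats 1000000
open scoped Matrix

/-- Inclusion of constants into the field of rational functions. -/
noncomputable def ratC (z : ℂ) : RatFunc ℂ := algebraMap ℂ (RatFunc ℂ) z

/-- A simple element of the form `p_{α,β,V,W}(λ) = ((λ-α)/(λ-β)) π_V + π_W`,
where `ℂⁿ = V ⊕ W` is a direct sum decomposition and `π_V, π_W` are the projections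
along this decomposition.  Such decompositions together with their projections correspond
exactly to idempotent matrices `P` (with `V = im P`, `W = ker P`, `π_V = P`, `π_W = 1 - P`). -/
def IsSimpleP {n : ℕ} (M : Matrix (Fin n) (Fin n) (RatFunc ℂ)) : Prop :=
  ∃ (α β : ℂ) (P : Matrix (Fin n) (Fin n) ℂ), α ≠ β ∧ P * P = P ∧
    M = ((RatFunc.X - RatFunc.C α) / (RatFunc.X - RatFunc.C β)) • P.map ratC +
        (1 - P).map ratC

/-- A simple element of the form `m_{α,k,N}(λ) = Id + (λ-α)^{-k} N`, where `k ≥ 1` and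
`N² = 0`. -/
def IsSimpleM {n : ℕ} (M : Matrix (Fin n) (Fin n) (RatFunc ℂ)) : Prop :=
  ∃ (α : ℂ) (k : ℕ) (N : Matrix (Fin n) (Fin n) ℂ), 1 ≤ k ∧ N * N = 0 ∧
    M = 1 + ((RatFunc.X - RatFunc.C α) ^ k)⁻¹ • N.map ratC

/-!
The transvection `1 + c (λ-α)^{-k} E_ij` is the simple element `m_{α,k,c E_ij}`, and the diagonal
matrix with `(λ-α)/(λ-β)` in place `i` and `1` elsewhere is `p_{α,β,ℂe_i,W}`. By partial
fractions every `f` with `f(∞) = 0` is a sum of terms `c (λ-α)^{-k}`, so every transvection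
`1 + f E_ij` is a product of simple elements; and every `u` with `u(∞) = 1` is a product of
factors `(λ-α)/(λ-β)`, so the matrix `diag(1, …, u, …, 1)` is one too. Since `g(∞) = 1`, the
diagonal entries of `g` are units at `∞`: Gaussian elimination pivoting on them one index at a
time only uses transvections whose entries vanish at `∞` and such diagonal matrices, and ends
at the identity.
-/

open scoped Polynomial

open Matrix

theorem Valuation.mul_sub_one_lt_one {R Γ₀ : Type*} [Ring R]
    [LinearOrderedCommMonoidWithZero Γ₀] (v : Valuation R Γ₀) {a b : R} (ha : v (a - 1) < 1)
    (hb : v (b - 1) < 1) : v (a * b - 1) < 1 := by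
  have h : a * b - 1 = (a - 1) * (b - 1) + ((a - 1) + (b - 1)) := by noncomm_ring
  rw [h]
  refine v.map_add_lt ?_ (v.map_add_lt ha hb)
  rw [v.map_mul]
  exact mul_lt_one_of_lt_of_le ha hb.le

namespace RatFunc

section Polynomial

variable {F : Type*} [Field F]

theorem algebraMap_X_sub_C (α : F) :
    algebraMap F[X] (RatFunc F) (Polynomial.X - Polynomial.C α) = X - C α := by
  simp [algebraMap_X, algebraMap_C]

theorem X_sub_C_ne_zero (α : F) : (X - C α : RatFunc F) ≠ 0 := by
  rw [← algebraMap_X_sub_C]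
  exact algebraMap_ne_zero (Polynomial.X_sub_C_ne_zero α)

theorem algebraMap_div_algebraMap_of_natDegree_eq_zero (p : F[X]) {q : F[X]}
    (hq : q.natDegree = 0) :
    algebraMap F[X] (RatFunc F) p / algebraMap F[X] (RatFunc F) q =
      algebraMap F[X] (RatFunc F) (Polynomial.C (q.coeff 0)⁻¹ * p) := by
  rw [Polynomial.eq_C_of_natDegree_eq_zero hq]
  simp [algebraMap_C, div_eq_inv_mul]

theorem exists_div_eq_C_div_X_sub_C_pow_add (p : F[X]) {q : F[X]} (hq : q ≠ 0) {β : F}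
    (hβ : q.IsRoot β) :
    ∃ (c : F) (k : ℕ) (p' q' : F[X]), q' ≠ 0 ∧ q'.natDegree < q.natDegree ∧
      algebraMap F[X] (RatFunc F) p / algebraMap F[X] (RatFunc F) q =
        C c / (X - C β) ^ (k + 1) +
          algebraMap F[X] (RatFunc F) p' / algebraMap F[X] (RatFunc F) q' := by
  obtain ⟨r, hqr, hr⟩ := q.exists_eq_pow_rootMultiplicity_mul_and_not_dvd hq β
  obtain ⟨k, hk⟩ := Nat.exists_eq_add_one.2 ((Polynomial.rootMultiplicity_pos hq).2 hβ)
  rw [hk] at hqr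
  have hrβ : r.eval β ≠ 0 := fun h => hr (Polynomial.dvd_iff_isRoot.2 h)
  have hr0 : r ≠ 0 := by rintro rfl; simp at hr
  have hXβ := Polynomial.X_sub_C_ne_zero β
  set c := p.eval β / r.eval β
  obtain ⟨p', hp'⟩ : Polynomial.X - Polynomial.C β ∣ p - Polynomial.C c * r := by
    rw [Polynomial.dvd_iff_isRoot]
    simp [c, hrβ]
  refine ⟨c, k, p', (Polynomial.X - Polynomial.C β) ^ k * r,
    mul_ne_zero (pow_ne_zero _ hXβ) hr0, ?_, ?_⟩
  · rw [hqr, Polynomial.natDegree_mul (pow_ne_zero _ hXβ) hr0,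
      Polynomial.natDegree_mul (pow_ne_zero _ hXβ) hr0]
    simp
  · have := X_sub_C_ne_zero β
    have := algebraMap_ne_zero (K := F) hr0
    rw [sub_eq_iff_eq_add] at hp'
    rw [hp', hqr]
    simp only [map_add, map_mul, map_pow, algebraMap_X_sub_C, algebraMap_C]
    field_simp
    ring

end Polynomial

section Valuation

variable {F : Type*} [Field F] [DecidableEq (RatFunc F)]

theorem inftyValuation_lt_one_iff {f : RatFunc F} :
    inftyValuation F f < 1 ↔ f = 0 ∨ f.intDegree < 0 := by
  rcases eq_or_ne f 0 with rfl | hf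
  · simp
  · simp [inftyValuation_apply, hf, ← WithZero.exp_zero, WithZero.exp_lt_exp]

theorem inftyValuation_algebraMap_lt_one_iff {p : F[X]} :
    inftyValuation F (algebraMap F[X] (RatFunc F) p) < 1 ↔ p = 0 := by
  simp [inftyValuation_lt_one_iff, intDegree_polynomial]

theorem inftyValuation_C_div_X_sub_C_pow_lt_one (c α : F) {k : ℕ} (hk : 0 < k) :
    inftyValuation F (C c / (X - C α) ^ k) < 1 := by
  rcases eq_or_ne c 0 with rfl | hc
  · simp
  rw [inftyValuation_lt_one_iff, div_eq_mul_inv, intDegree_mul (by simpa using hc)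
    (inv_ne_zero (pow_ne_zero _ (X_sub_C_ne_zero α))), intDegree_inv, intDegree_C,
    ← algebraMap_X_sub_C, ← map_pow, intDegree_polynomial]
  simp [hk]

theorem inftyValuation_X_sub_C_div_X_sub_C_sub_one_lt_one (α β : F) :
    inftyValuation F ((X - C α) / (X - C β) - 1) < 1 := by
  have hfactor : (X - C α) / (X - C β) - 1 = C (β - α) / (X - C β) ^ 1 := by
    have := X_sub_C_ne_zero β
    field_simp
    simp
  rw [hfactor]
  exact inftyValuation_C_div_X_sub_C_pow_lt_one (β - α) β one_pos

theorem natDegree_eq_of_inftyValuation_div_eq_one {p q : F[X]} (hq : q ≠ 0)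
    (h : inftyValuation F (algebraMap F[X] (RatFunc F) p / algebraMap F[X] (RatFunc F) q) = 1) :
    p.natDegree = q.natDegree := by
  have hp : p ≠ 0 := by rintro rfl; simp at h
  rw [map_div₀, inftyValuation_apply, inftyValuation_apply, inftyValuation.polynomial _ hp,
    inftyValuation.polynomial _ hq, div_eq_one_iff_eq (by simp), WithZero.exp_inj] at h
  exact_mod_cast h

end Valuation

section AlgClosed

variable {F : Type*} [Field F] [IsAlgClosed F] [DecidableEq (RatFunc F)]

theorem mem_closure_C_div_X_sub_C_pow {f : RatFunc F} (hf : inftyValuation F f < 1) :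
    f ∈ AddSubmonoid.closure
      {g | ∃ (c α : F) (k : ℕ), 0 < k ∧ g = C c / (X - C α) ^ k} := by
  rw [← num_div_denom f] at hf ⊢
  generalize f.num = p, f.denom = q, f.denom_ne_zero = hq at hf ⊢
  induction hN : q.natDegree using Nat.strong_induction_on generalizing p q with
  | _ N ih =>
  subst hN
  rcases Nat.eq_zero_or_pos q.natDegree with hN0 | hN0
  · rw [algebraMap_div_algebraMap_of_natDegree_eq_zero p hN0] at hf ⊢
    rw [inftyValuation_algebraMap_lt_one_iff.1 hf, map_zero]
    exact zero_mem _
  obtain ⟨β, hβ⟩ := IsAlgClosed.exists_root q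
    (by rw [Polynomial.degree_eq_natDegree hq]; exact_mod_cast hN0.ne')
  obtain ⟨c, k, p', q', hq', hdeg, hsplit⟩ := exists_div_eq_C_div_X_sub_C_pow_add p hq hβ
  rw [hsplit] at hf ⊢
  refine add_mem (AddSubmonoid.subset_closure ⟨c, β, k + 1, k.succ_pos, rfl⟩)
    (ih _ hdeg _ _ hq' ?_ rfl)
  simpa using (inftyValuation F).map_sub_lt hf
    (inftyValuation_C_div_X_sub_C_pow_lt_one c β k.succ_pos)

theorem mem_closure_X_sub_C_div_X_sub_C {u : RatFunc F} (hu : inftyValuation F (u - 1) < 1) :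
    u ∈ Submonoid.closure {g | ∃ α β : F, g = (X - C α) / (X - C β)} := by
  rw [← num_div_denom u] at hu ⊢
  generalize u.num = p, u.denom = q, u.denom_ne_zero = hq at hu ⊢
  induction hN : q.natDegree using Nat.strong_induction_on generalizing p q with
  | _ N ih =>
  subst hN
  rcases Nat.eq_zero_or_pos q.natDegree with hN0 | hN0
  · rw [algebraMap_div_algebraMap_of_natDegree_eq_zero p hN0] at hu ⊢
    rw [← map_one (algebraMap F[X] (RatFunc F)), ← map_sub,
      inftyValuation_algebraMap_lt_one_iff, sub_eq_zero] at hu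
    rw [hu, map_one]
    exact one_mem _
  have hdeg : p.natDegree = q.natDegree := natDegree_eq_of_inftyValuation_div_eq_one hq
    (((inftyValuation F).map_eq_of_sub_lt (by rwa [map_one])).trans (map_one _))
  have hp : p ≠ 0 := by rintro rfl; simp only [Polynomial.natDegree_zero] at hdeg; omega
  obtain ⟨α, hα⟩ := IsAlgClosed.exists_root p
    (by rw [Polynomial.degree_eq_natDegree hp, hdeg]; exact_mod_cast hN0.ne')
  obtain ⟨β, hβ⟩ := IsAlgClosed.exists_root q
    (by rw [Polynomial.degree_eq_natDegree hq]; exact_mod_cast hN0.ne')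
  obtain ⟨p₁, rfl⟩ := Polynomial.dvd_iff_isRoot.2 hα
  obtain ⟨q₁, rfl⟩ := Polynomial.dvd_iff_isRoot.2 hβ
  have hq₁ : q₁ ≠ 0 := right_ne_zero_of_mul hq
  simp only [map_mul, algebraMap_X_sub_C, mul_div_mul_comm] at hu ⊢
  refine mul_mem (Submonoid.subset_closure ⟨α, β, rfl⟩) (ih _ ?_ _ _ hq₁ ?_ rfl)
  · rw [Polynomial.natDegree_mul (Polynomial.X_sub_C_ne_zero β) hq₁]
    simp
  · have := X_sub_C_ne_zero α
    have := X_sub_C_ne_zero β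
    convert (inftyValuation F).mul_sub_one_lt_one hu
      (inftyValuation_X_sub_C_div_X_sub_C_sub_one_lt_one β α) using 2
    field_simp

end AlgClosed

end RatFunc

theorem one_add_sum_mem_of_mul_eq_zero {R ι : Type*} [Ring R] [DecidableEq ι] (S : Submonoid R)
    {A : ι → R} {s : Finset ι} (hA : ∀ i ∈ s, ∀ j ∈ s, A i * A j = 0)
    (hS : ∀ i ∈ s, 1 + A i ∈ S) : 1 + ∑ i ∈ s, A i ∈ S := by
  induction s using Finset.induction_on with
  | empty => simp
  | insert i s hi ih =>
    have hzero : A i * ∑ j ∈ s, A j = 0 := by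
      rw [Finset.mul_sum]
      exact Finset.sum_eq_zero fun j hj =>
        hA i (Finset.mem_insert_self i s) j (Finset.mem_insert_of_mem hj)
    have hsplit : 1 + ∑ j ∈ insert i s, A j = (1 + A i) * (1 + ∑ j ∈ s, A j) := by
      rw [Finset.sum_insert hi, mul_add, add_mul, add_mul, hzero]
      noncomm_ring
    rw [hsplit]
    exact mul_mem (hS i (Finset.mem_insert_self i s)) (ih
      (fun j hj k hk => hA j (Finset.mem_insert_of_mem hj) k (Finset.mem_insert_of_mem hk))
      (fun j hj => hS j (Finset.mem_insert_of_mem hj)))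

namespace Matrix

variable {m R : Type*} [DecidableEq m]

theorem one_add_sum_single_mul_apply [Fintype m] [Semiring R] (c : m → R) (κ : m)
    (M : Matrix m m R) (a b : m) :
    ((1 + ∑ i, single i κ (c i)) * M) a b = M a b + c a * M κ b := by
  rw [add_mul, one_mul, add_apply, Finset.sum_mul, sum_apply,
    Finset.sum_eq_single a (fun i _ hi => single_mul_apply_of_ne _ _ _ _ _ (Ne.symm hi) _)
      (by simp), single_mul_apply_same]

theorem mul_one_add_sum_single_apply [Fintype m] [Semiring R] (M : Matrix m m R) (κ : m)
    (d : m → R) (a b : m) :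
    (M * (1 + ∑ j, single κ j (d j))) a b = M a b + M a κ * d b := by
  rw [mul_add, mul_one, add_apply, Finset.mul_sum, sum_apply,
    Finset.sum_eq_single b (fun j _ hj => mul_single_apply_of_ne _ _ _ _ _ (Ne.symm hj) _)
      (by simp), mul_single_apply_same]

variable [Field R]

/-- The Schur complement of the pivot entry `g κ κ`, bordered by the identity in row and
column `κ`. -/
def pivotComplement (g : Matrix m m R) (κ : m) : Matrix m m R :=
  of fun i j =>
    if i = κ ∨ j = κ then (1 : Matrix m m R) i j else g i j - g i κ * g κ j / g κ κ

theorem eq_mul_diagonal_mul_pivotComplement_mul [Fintype m] (g : Matrix m m R) {κ : m}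
    (hκ : g κ κ ≠ 0) :
    g = (1 + ∑ i, single i κ (Function.update (fun i => g i κ / g κ κ) κ 0 i)) *
      diagonal (Pi.mulSingle κ (g κ κ)) * pivotComplement g κ *
      (1 + ∑ j, single κ j (Function.update (fun j => g κ j / g κ κ) κ 0 j)) := by
  ext a b
  rw [mul_assoc _ (diagonal _), mul_one_add_sum_single_apply, one_add_sum_single_mul_apply,
    one_add_sum_single_mul_apply]
  simp only [diagonal_mul, pivotComplement, of_apply, Pi.mulSingle_apply, Function.update_apply,
    one_apply]
  by_cases ha : a = κ <;> by_cases hb : b = κ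
  · simp [ha, hb]
  · simp [ha, hb, @eq_comm _ κ b]
    field_simp
  · simp [ha, hb]
    field_simp
  · simp [ha, hb, @eq_comm _ κ b]
    field_simp
    ring

theorem pivotComplement_apply_eq_one_apply {g : Matrix m m R} {κ : m} {s : Finset m}
    (hs : ∀ i j, i ∉ insert κ s ∨ j ∉ insert κ s → g i j = (1 : Matrix m m R) i j)
    {i j : m} (hij : i ∉ s ∨ j ∉ s) : pivotComplement g κ i j = (1 : Matrix m m R) i j := by
  simp only [pivotComplement, of_apply]
  split_ifs with hκ
  · rfl
  rw [not_or] at hκ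
  rcases hij with hi | hj
  · have hi' : i ∉ insert κ s := by simp [hκ.1, hi]
    rw [hs i j (Or.inl hi'), hs i κ (Or.inl hi'), one_apply_ne hκ.1]
    simp
  · have hj' : j ∉ insert κ s := by simp [hκ.2, hj]
    rw [hs i j (Or.inr hj'), hs κ j (Or.inr hj'), one_apply_ne (Ne.symm hκ.2)]
    simp

end Matrix

section OneAtInfty

variable {m F : Type*} [DecidableEq m] [Field F] [DecidableEq (RatFunc F)]

def IsOneAtInfty (g : Matrix m m (RatFunc F)) : Prop :=
  ∀ i j, RatFunc.inftyValuation F ((g - 1) i j) < 1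

namespace IsOneAtInfty

variable {g : Matrix m m (RatFunc F)}

theorem apply_lt_one (hg : IsOneAtInfty g) {i j : m} (hij : i ≠ j) :
    RatFunc.inftyValuation F (g i j) < 1 := by
  simpa [one_apply_ne hij] using hg i j

theorem apply_self_sub_one_lt_one (hg : IsOneAtInfty g) (i : m) :
    RatFunc.inftyValuation F (g i i - 1) < 1 := by
  simpa using hg i i

theorem inftyValuation_apply_self (hg : IsOneAtInfty g) (i : m) :
    RatFunc.inftyValuation F (g i i) = 1 :=
  ((RatFunc.inftyValuation F).map_eq_of_sub_lt
    (by rw [map_one]; exact hg.apply_self_sub_one_lt_one i)).trans (map_one _)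

theorem pivotComplement (hg : IsOneAtInfty g) (κ : m) :
    IsOneAtInfty (g.pivotComplement κ) := by
  intro i j
  simp only [Matrix.sub_apply, Matrix.pivotComplement, of_apply]
  split_ifs with h
  · simp
  rw [not_or] at h
  rw [sub_right_comm, ← Matrix.sub_apply]
  refine Valuation.map_sub_lt _ (hg i j) ?_
  rw [map_div₀, hg.inftyValuation_apply_self, div_one, map_mul]
  exact mul_lt_one_of_lt_of_le (hg.apply_lt_one h.1) (hg.apply_lt_one (Ne.symm h.2)).le

end IsOneAtInfty

end OneAtInfty

noncomputable def simpleProducts (n : ℕ) : Submonoid (Matrix (Fin n) (Fin n) (RatFunc ℂ)) :=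
  Submonoid.closure {M | IsSimpleP M ∨ IsSimpleM M}

theorem ratC_eq_C : ratC = RatFunc.C := by
  ext z
  rw [ratC, RatFunc.algebraMap_eq_C]

section SimpleProducts

variable {n : ℕ}

theorem transvection_C_div_X_sub_C_pow_mem {i j : Fin n} (hij : i ≠ j) (c α : ℂ) {k : ℕ}
    (hk : 0 < k) :
    transvection i j (RatFunc.C c / (RatFunc.X - RatFunc.C α) ^ k) ∈ simpleProducts n := by
  refine Submonoid.subset_closure (Or.inr ⟨α, k, single i j c, hk,
    single_mul_single_of_ne (h := hij.symm) .., ?_⟩)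
  rw [transvection, ratC_eq_C, map_single, smul_single, smul_eq_mul, div_eq_inv_mul]

theorem diagonal_mulSingle_X_sub_C_div_mem (i : Fin n) (α β : ℂ) :
    diagonal (Pi.mulSingle i ((RatFunc.X - RatFunc.C α) / (RatFunc.X - RatFunc.C β))) ∈
      simpleProducts n := by
  rcases eq_or_ne α β with rfl | hαβ
  · simp [div_self (RatFunc.X_sub_C_ne_zero α)]
  refine Submonoid.subset_closure (Or.inl ⟨α, β, single i i 1, hαβ, by simp, ?_⟩)
  ext a b
  by_cases ha : a = i <;> by_cases hb : b = i <;>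
    simp [ha, hb, @eq_comm _ i a, @eq_comm _ i b, diagonal_apply, one_apply, ratC_eq_C]

variable [DecidableEq (RatFunc ℂ)]

theorem transvection_mem {i j : Fin n} (hij : i ≠ j) {f : RatFunc ℂ}
    (hf : RatFunc.inftyValuation ℂ f < 1) : transvection i j f ∈ simpleProducts n := by
  have hmem := RatFunc.mem_closure_C_div_X_sub_C_pow hf
  clear hf
  induction hmem using AddSubmonoid.closure_induction with
  | mem f hf =>
    obtain ⟨c, α, k, hk, rfl⟩ := hf
    exact transvection_C_div_X_sub_C_pow_mem hij c α hk
  | zero => simp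
  | add f f' _ _ hf hf' =>
    rw [← transvection_mul_transvection_same (h := hij)]
    exact mul_mem hf hf'

theorem diagonal_mulSingle_mem (i : Fin n) {u : RatFunc ℂ}
    (hu : RatFunc.inftyValuation ℂ (u - 1) < 1) :
    diagonal (Pi.mulSingle i u) ∈ simpleProducts n := by
  have hmem := RatFunc.mem_closure_X_sub_C_div_X_sub_C hu
  clear hu
  induction hmem using Submonoid.closure_induction with
  | mem u hu =>
    obtain ⟨α, β, rfl⟩ := hu
    exact diagonal_mulSingle_X_sub_C_div_mem i α β
  | one => simp
  | mul u w _ _ hu hw =>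
    rw [Pi.mulSingle_mul, Pi.mul_def, ← diagonal_mul_diagonal]
    exact mul_mem hu hw

theorem one_add_sum_single_col_mem {κ : Fin n} {c : Fin n → RatFunc ℂ}
    (hc : ∀ i, RatFunc.inftyValuation ℂ (c i) < 1) (hκ : c κ = 0) :
    1 + ∑ i, single i κ (c i) ∈ simpleProducts n := by
  refine one_add_sum_mem_of_mul_eq_zero _ (fun i _ j _ => ?_) (fun i _ => ?_)
  · rcases eq_or_ne j κ with rfl | hj
    · simp [hκ]
    · exact single_mul_single_of_ne (h := hj.symm) ..
  · rcases eq_or_ne i κ with rfl | hi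
    · simp [hκ]
    · exact transvection_mem hi (hc i)

theorem one_add_sum_single_row_mem {κ : Fin n} {d : Fin n → RatFunc ℂ}
    (hd : ∀ j, RatFunc.inftyValuation ℂ (d j) < 1) (hκ : d κ = 0) :
    1 + ∑ j, single κ j (d j) ∈ simpleProducts n := by
  refine one_add_sum_mem_of_mul_eq_zero _ (fun i _ j _ => ?_) (fun j _ => ?_)
  · rcases eq_or_ne i κ with rfl | hi
    · simp [hκ]
    · exact single_mul_single_of_ne (h := hi) ..
  · rcases eq_or_ne j κ with rfl | hj
    · simp [hκ]
    · exact transvection_mem hj.symm (hd j)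

theorem mem_simpleProducts_of_eq_one_off (s : Finset (Fin n))
    {g : Matrix (Fin n) (Fin n) (RatFunc ℂ)} (hg : IsOneAtInfty g)
    (hs : ∀ i j, i ∉ s ∨ j ∉ s → g i j = (1 : Matrix (Fin n) (Fin n) (RatFunc ℂ)) i j) :
    g ∈ simpleProducts n := by
  induction s using Finset.induction_on generalizing g with
  | empty =>
    rw [show g = 1 from Matrix.ext fun i j => hs i j (Or.inl (Finset.notMem_empty i))]
    exact one_mem _
  | insert κ t _ ih =>
    have hval := hg.inftyValuation_apply_self κ
    have hsmall {i j : Fin n} (hij : i ≠ j) :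
        RatFunc.inftyValuation ℂ (g i j / g κ κ) < 1 := by
      rw [map_div₀, hval, div_one]
      exact hg.apply_lt_one hij
    rw [g.eq_mul_diagonal_mul_pivotComplement_mul
      ((RatFunc.inftyValuation ℂ).ne_zero_iff.1 (hval ▸ one_ne_zero))]
    refine mul_mem (mul_mem (mul_mem (one_add_sum_single_col_mem (fun i => ?_) (by simp))
      (diagonal_mulSingle_mem κ (hg.apply_self_sub_one_lt_one κ)))
      (ih (hg.pivotComplement κ) fun i j => pivotComplement_apply_eq_one_apply hs))
      (one_add_sum_single_row_mem (fun j => ?_) (by simp))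
    · rcases eq_or_ne i κ with rfl | hi
      · simp
      · simpa [Function.update_apply, hi] using hsmall hi
    · rcases eq_or_ne j κ with rfl | hj
      · simp
      · simpa [Function.update_apply, hj] using hsmall hj.symm

theorem IsOneAtInfty.mem_simpleProducts {g : Matrix (Fin n) (Fin n) (RatFunc ℂ)}
    (hg : IsOneAtInfty g) : g ∈ simpleProducts n :=
  mem_simpleProducts_of_eq_one_off Finset.univ hg fun i j h => by simp at h

end SimpleProducts

theorem generating_GLnC_general (n : ℕ) (g : Matrix (Fin n) (Fin n) (RatFunc ℂ))
    (hneg : ∀ i j, (g - 1) i j = 0 ∨ ((g - 1) i j).intDegree < 0) :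
    ∃ L : List (Matrix (Fin n) (Fin n) (RatFunc ℂ)),
      (∀ M ∈ L, IsSimpleP M ∨ IsSimpleM M) ∧ g = L.prod := by
  classical
  have hg : IsOneAtInfty g := fun i j => RatFunc.inftyValuation_lt_one_iff.2 (hneg i j)
  obtain ⟨L, hL, hprod⟩ := Submonoid.exists_list_of_mem_closure hg.mem_simpleProducts
  exact ⟨L, hL, hprod.symm⟩

/-- **Generating the full rational loop group of GL(n,ℂ).**
Every negative rational loop `g` in `GL(n,ℂ)` (an `n×n` matrix of rational functions with
`det g` not identically zero and `g(∞) = Id`, i.e. every entry of `g - Id` has numerator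
degree strictly smaller than denominator degree) is a finite product of simple elements
of the types `p_{α,β,V,W}` and `m_{α,k,N}`. -/
theorem generating_GLnC (n : ℕ) (g : Matrix (Fin n) (Fin n) (RatFunc ℂ))
    (hdet : g.det ≠ 0)
    (hneg : ∀ i j, (g - 1) i j = 0 ∨ ((g - 1) i j).intDegree < 0) :
    ∃ L : List (Matrix (Fin n) (Fin n) (RatFunc ℂ)),
      (∀ M ∈ L, IsSimpleP M ∨ IsSimpleM M) ∧ g = L.prod :=
  generating_GLnC_general n g hneg
end

section
/- Let V ⊆ ℂⁿ be an isotropic subspace, and let v ∈ V and w ∈ ℂⁿ with w ∉ V^⊥ be vectors such that ⟨v,w⟩ is purely imaginary. Then there exists an endomorphism N of ℂⁿ with N* = −N and N² = 0 such that N vanishes on V^⊥, the image of N is contained in V, and N(w) = v. -/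
set_option synthInstance.maxHeartbeats 1000000
set_option maxHeartbeats 1000000

open scoped Matrix ComplexConjugate

/-- The matrix `s = diag(-I_p, I_q)`. -/
noncomputable def sMat (p q : ℕ) : Matrix (Fin (p + q)) (Fin (p + q)) ℂ :=
  Matrix.diagonal fun i => if (i : ℕ) < p then (-1 : ℂ) else 1

/-- The Hermitian form `⟨v,w⟩ = -∑_{i<p} conj(v_i) w_i + ∑_{i≥p} conj(v_i) w_i`
of signature `(p,q)` on `ℂⁿ`, `n = p + q`. -/
noncomputable def herm (p q : ℕ) (v w : Fin (p + q) → ℂ) : ℂ :=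
  dotProduct (star v) ((sMat p q).mulVec w)

/-- The adjoint `A* = s Aᴴ s` of a matrix with respect to the form `herm p q`. -/
noncomputable def adjUpq (p q : ℕ) (A : Matrix (Fin (p + q)) (Fin (p + q)) ℂ) :
    Matrix (Fin (p + q)) (Fin (p + q)) ℂ :=
  sMat p q * Aᴴ * sMat p q

/-- A subspace is isotropic for the form `herm p q`. -/
def IsIsotropic (p q : ℕ) (V : Submodule ℂ (Fin (p + q) → ℂ)) : Prop :=
  ∀ v ∈ V, ∀ w ∈ V, herm p q v w = 0

/-! Pick `x ∈ V` with `c = ⟨x, w⟩ ≠ 0` and put `a = c⁻¹ v`. The map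
`N u = ⟨x, u⟩ a - ⟨a, u⟩ x + μ ⟨x, u⟩ x` is skew-adjoint whenever `μ` is purely imaginary,
squares to zero because `a` and `x` lie in the isotropic `V`, kills `V^⊥` and has image in `V`.
At `w` it gives `v - (⟨v, w⟩ / conj c - μ c) x`, so `μ = ⟨v, w⟩ / |c|²` works, and it is purely
imaginary exactly because `⟨v, w⟩` is. -/

noncomputable def rankOne (p q : ℕ) (a c : Fin (p + q) → ℂ) :
    Matrix (Fin (p + q)) (Fin (p + q)) ℂ :=
  Matrix.vecMulVec a (star c) * sMat p q

lemma sMat_conjTranspose (p q : ℕ) : (sMat p q)ᴴ = sMat p q := by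
  simp only [sMat, Matrix.diagonal_conjTranspose]
  congr 1
  ext i
  by_cases h : (i : ℕ) < p <;> simp [h]

lemma sMat_mul_self (p q : ℕ) : sMat p q * sMat p q = 1 := by
  simp only [sMat, Matrix.diagonal_mul_diagonal, ← Matrix.diagonal_one]
  congr 1
  ext i
  split_ifs <;> simp

lemma herm_smul_left (p q : ℕ) (k : ℂ) (x u : Fin (p + q) → ℂ) :
    herm p q (k • x) u = conj k * herm p q x u := by
  rw [herm, herm, star_smul, smul_dotProduct, smul_eq_mul, starRingEnd_apply]

lemma rankOne_mulVec (p q : ℕ) (a c u : Fin (p + q) → ℂ) :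
    rankOne p q a c *ᵥ u = herm p q c u • a := by
  rw [rankOne, ← Matrix.mulVec_mulVec, Matrix.vecMulVec_mulVec, op_smul_eq_smul]
  rfl

lemma rankOne_mul_rankOne (p q : ℕ) (a c a' c' : Fin (p + q) → ℂ) :
    rankOne p q a c * rankOne p q a' c' = herm p q c a' • rankOne p q a c' := by
  rw [rankOne, rankOne, rankOne, Matrix.mul_assoc, ← Matrix.mul_assoc (sMat p q),
    Matrix.mul_vecMulVec, ← Matrix.mul_assoc, Matrix.vecMulVec_mul_vecMulVec,
    Matrix.vecMulVec_smul, Matrix.smul_mul]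
  rfl

lemma adjUpq_rankOne (p q : ℕ) (a c : Fin (p + q) → ℂ) :
    adjUpq p q (rankOne p q a c) = rankOne p q c a := by
  rw [adjUpq, rankOne, rankOne, Matrix.conjTranspose_mul, Matrix.conjTranspose_vecMulVec,
    sMat_conjTranspose, star_star, ← Matrix.mul_assoc, sMat_mul_self,
    Matrix.one_mul]

lemma adjUpq_add (p q : ℕ) (A B : Matrix (Fin (p + q)) (Fin (p + q)) ℂ) :
    adjUpq p q (A + B) = adjUpq p q A + adjUpq p q B := by
  simp only [adjUpq, Matrix.conjTranspose_add, Matrix.mul_add, Matrix.add_mul]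

lemma adjUpq_sub (p q : ℕ) (A B : Matrix (Fin (p + q)) (Fin (p + q)) ℂ) :
    adjUpq p q (A - B) = adjUpq p q A - adjUpq p q B := by
  simp only [adjUpq, Matrix.conjTranspose_sub, Matrix.mul_sub, Matrix.sub_mul]

lemma adjUpq_smul (p q : ℕ) (k : ℂ) (A : Matrix (Fin (p + q)) (Fin (p + q)) ℂ) :
    adjUpq p q (k • A) = conj k • adjUpq p q A := by
  simp only [adjUpq, Matrix.conjTranspose_smul, Matrix.mul_smul, Matrix.smul_mul,
    starRingEnd_apply]

noncomputable def skewMat (p q : ℕ) (a c : Fin (p + q) → ℂ) (μ : ℂ) :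
    Matrix (Fin (p + q)) (Fin (p + q)) ℂ :=
  rankOne p q a c - rankOne p q c a + μ • rankOne p q c c

section skewMat

variable {p q : ℕ} {a c : Fin (p + q) → ℂ} {μ : ℂ}

lemma skewMat_mulVec (u : Fin (p + q) → ℂ) :
    skewMat p q a c μ *ᵥ u =
      herm p q c u • a - herm p q a u • c + (μ * herm p q c u) • c := by
  simp only [skewMat, Matrix.add_mulVec, Matrix.sub_mulVec, Matrix.smul_mulVec, rankOne_mulVec,
    smul_smul]

lemma adjUpq_skewMat (hμ : conj μ = -μ) :
    adjUpq p q (skewMat p q a c μ) = -skewMat p q a c μ := by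
  rw [skewMat, adjUpq_add, adjUpq_sub, adjUpq_smul, adjUpq_rankOne, adjUpq_rankOne,
    adjUpq_rankOne, hμ, neg_smul]
  abel

lemma skewMat_mul_self (haa : herm p q a a = 0) (hac : herm p q a c = 0)
    (hca : herm p q c a = 0) (hcc : herm p q c c = 0) :
    skewMat p q a c μ * skewMat p q a c μ = 0 := by
  simp [skewMat, Matrix.add_mul, Matrix.mul_add, Matrix.sub_mul, Matrix.mul_sub,
    rankOne_mul_rankOne, haa, hac, hca, hcc]

lemma skewMat_mulVec_eq_zero {u : Fin (p + q) → ℂ} (ha : herm p q a u = 0)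
    (hc : herm p q c u = 0) : skewMat p q a c μ *ᵥ u = 0 := by
  simp [skewMat_mulVec, ha, hc]

lemma skewMat_mulVec_mem {V : Submodule ℂ (Fin (p + q) → ℂ)} (ha : a ∈ V) (hc : c ∈ V)
    (u : Fin (p + q) → ℂ) : skewMat p q a c μ *ᵥ u ∈ V := by
  rw [skewMat_mulVec]
  exact V.add_mem (V.sub_mem (V.smul_mem _ ha) (V.smul_mem _ hc)) (V.smul_mem _ hc)

end skewMat

/-- **Lemma 4.2 (second part).**  Given an isotropic subspace `V`, a vector `v ∈ V` and a
vector `w ∉ V^⊥` with `⟨v,w⟩` purely imaginary, there is a skew-adjoint two-step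
nilpotent `N` with `N(V^⊥) = 0`, `im N ⊆ V` and `N w = v`. -/
theorem exists_skew_two_step_nilpotent (p q : ℕ) (V : Submodule ℂ (Fin (p + q) → ℂ))
    (hV : IsIsotropic p q V) (v w : Fin (p + q) → ℂ) (hv : v ∈ V)
    (hw : ∃ x ∈ V, herm p q x w ≠ 0) (hvw : (herm p q v w).re = 0) :
    ∃ N : Matrix (Fin (p + q)) (Fin (p + q)) ℂ,
      adjUpq p q N = -N ∧ N * N = 0 ∧
      (∀ u : Fin (p + q) → ℂ, (∀ x ∈ V, herm p q x u = 0) → N.mulVec u = 0) ∧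
      (∀ u : Fin (p + q) → ℂ, N.mulVec u ∈ V) ∧
      N.mulVec w = v := by
  obtain ⟨x, hx, hc⟩ := hw
  set c := herm p q x w
  set d := herm p q v w
  have hb : c⁻¹ • v ∈ V := V.smul_mem _ hv
  set μ := d / (c * conj c)
  have hμ : conj μ = -μ := by
    have hd : conj d = -d := Complex.ext (by simp [hvw]) (by simp)
    rw [map_div₀, map_mul, hd, Complex.conj_conj, mul_comm (conj c), neg_div]
  refine ⟨skewMat p q (c⁻¹ • v) x μ, adjUpq_skewMat hμ,
    skewMat_mul_self (hV _ hb _ hb) (hV _ hb _ hx) (hV _ hx _ hb) (hV _ hx _ hx),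
    fun u hu => skewMat_mulVec_eq_zero (hu _ hb) (hu _ hx),
    skewMat_mulVec_mem hb hx, ?_⟩
  rw [skewMat_mulVec, herm_smul_left, smul_smul, mul_inv_cancel₀ hc, one_smul, map_inv₀,
    show μ * c = (conj c)⁻¹ * d by simp only [μ]; field_simp, sub_add_cancel]
end

section
/- Assume p < q and let V ⊆ ℂⁿ be a maximal isotropic subspace. Let u, v, w ∈ ℂⁿ be vectors such that w ∈ V, v ∈ V^⊥ ∖ V, u ∉ V^⊥, ⟨u,w⟩ ∈ ℝ, and 2⟨u,w⟩ + ⟨v,v⟩ = 0. Then there exists a linear map M: ℂⁿ → ℂⁿ with M(V ⊕ sV) = 0 and image of M contained in V such that the skewsymmetric endomorphism N = M − M* satisfies (1/2)N²(u) + N(v) + w = 0. -/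
set_option synthInstance.maxHeartbeats 1000000
set_option maxHeartbeats 1000000

open scoped Matrix ComplexConjugate

lemma herm_apply (p q : ℕ) (x y : Fin (p+q) → ℂ) :
    herm p q x y = ∑ i : Fin (p+q), (if i.1 < p then (-1:ℂ) else 1) * (conj (x i) * y i) := by
  simp only [herm, sMat, dotProduct, Matrix.mulVec_diagonal, Pi.star_apply,
    RCLike.star_def]
  refine Finset.sum_congr rfl fun i _ => ?_
  ring

lemma herm_conj (p q : ℕ) (x y : Fin (p+q) → ℂ) :
    herm p q x y = conj (herm p q y x) := by
  simp only [herm_apply, map_sum, map_mul, Complex.conj_conj]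
  refine Finset.sum_congr rfl fun i _ => ?_
  split <;> simp <;> ring

lemma herm_add_right (p q : ℕ) (x y z : Fin (p+q) → ℂ) :
    herm p q x (y + z) = herm p q x y + herm p q x z := by
  simp [herm_apply, Finset.sum_add_distrib, mul_add, Pi.add_apply]

lemma herm_smul_right (p q : ℕ) (a : ℂ) (x y : Fin (p+q) → ℂ) :
    herm p q x (a • y) = a * herm p q x y := by
  simp [herm_apply, Finset.mul_sum, Pi.smul_apply, smul_eq_mul]
  refine Finset.sum_congr rfl fun i _ => ?_
  ring

/-- surjectivity of truncation onto the first `p` coordinates. -/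
lemma exists_matching_head (p q : ℕ) (V : Submodule ℂ (Fin (p+q) → ℂ))
    (hV : IsIsotropic p q V) (hVmax : Module.finrank ℂ V = p) (e : Fin (p+q) → ℂ) :
    ∃ x ∈ V, ∀ i : Fin (p+q), i.1 < p → x i = e i := by
  classical
  set T : V →ₗ[ℂ] (Fin p → ℂ) :=
    (LinearMap.funLeft ℂ ℂ (Fin.castAdd q)).comp V.subtype with hT
  have hinj : Function.Injective T := by
    rw [← LinearMap.ker_eq_bot, LinearMap.ker_eq_bot']
    intro x hx0
    have hx0' : ∀ i : Fin (p+q), i.1 < p → (x : Fin (p+q) → ℂ) i = 0 := by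
      intro i hi
      have := congrFun hx0 ⟨i.1, hi⟩
      simpa [hT, LinearMap.funLeft, Fin.castAdd, Fin.castLE, Fin.ext_iff] using this
    have hxx : herm p q x x = 0 := hV x x.2 x x.2
    rw [herm_apply] at hxx
    have hre : ∑ i : Fin (p+q), (if i.1 < p then (0:ℝ) else Complex.normSq ((x:Fin (p+q)→ℂ) i)) = 0 := by
      have : ∑ i : Fin (p+q), (if i.1 < p then (-1:ℂ) else 1) * (conj ((x:Fin (p+q)→ℂ) i) * (x:Fin (p+q)→ℂ) i)
          = ∑ i : Fin (p+q), ((if i.1 < p then (0:ℝ) else Complex.normSq ((x:Fin (p+q)→ℂ) i)) : ℂ) := by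
        refine Finset.sum_congr rfl fun i _ => ?_
        by_cases hi : i.1 < p
        · simp [hi, hx0' i hi]
        · simp [hi, Complex.normSq_eq_conj_mul_self]
      rw [this] at hxx
      have hre2 := congrArg Complex.re hxx
      simpa [Complex.re_sum, apply_ite Complex.re] using hre2
    have hall := (Finset.sum_eq_zero_iff_of_nonneg (by
      intro i _
      by_cases hi : i.1 < p <;> simp [hi, Complex.normSq_nonneg])).mp hre
    ext i
    by_cases hi : i.1 < p
    · exact hx0' i hi
    · have := hall i (Finset.mem_univ i)
      simpa [hi] using this
  have hsurj : Function.Surjective T := by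
    have h1 : Module.finrank ℂ V = Module.finrank ℂ (Fin p → ℂ) := by
      rw [hVmax, Module.finrank_fin_fun]
    exact (LinearMap.injective_iff_surjective_of_finrank_eq_finrank h1).mp hinj
  obtain ⟨x, hx⟩ := hsurj (fun i => e (Fin.castAdd q i))
  refine ⟨x, x.2, fun i hi => ?_⟩
  have := congrFun hx ⟨i.1, hi⟩
  simpa [hT, LinearMap.funLeft, Fin.castAdd, Fin.castLE, Fin.ext_iff] using this

lemma vecMulVec_mulVec' {n : Type*} [Fintype n] (x y z : n → ℂ) :
    (Matrix.vecMulVec x y) *ᵥ z = (dotProduct y z) • x := by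
  funext i
  simp [Matrix.mulVec, Matrix.vecMulVec_apply, dotProduct, Finset.sum_mul, Finset.mul_sum]
  refine Finset.sum_congr rfl fun j _ => ?_
  ring

/-- **Lemma 4.4.**  Assume `p < q` and let `V` be maximal isotropic.  If `w ∈ V`,
`v ∈ V^⊥ ∖ V`, `u ∉ V^⊥`, `⟨u,w⟩ ∈ ℝ` and `2⟨u,w⟩ + ⟨v,v⟩ = 0`, then there is a linear
map `M` with `M(V ⊕ sV) = 0` and `im M ⊆ V` such that `N = M - M*` satisfies
`(1/2) N² u + N v + w = 0`. -/
theorem exists_three_step_nilpotent (p q : ℕ) (hpq : p < q)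
    (V : Submodule ℂ (Fin (p + q) → ℂ)) (hV : IsIsotropic p q V)
    (hVmax : Module.finrank ℂ V = p)
    (u v w : Fin (p + q) → ℂ)
    (hw : w ∈ V)
    (hv1 : ∀ x ∈ V, herm p q x v = 0) (hv2 : v ∉ V)
    (hu : ∃ x ∈ V, herm p q x u ≠ 0)
    (huw : (herm p q u w).im = 0)
    (hrel : 2 * herm p q u w + herm p q v v = 0) :
    ∃ M : Matrix (Fin (p + q)) (Fin (p + q)) ℂ,
      (∀ x ∈ V ⊔ V.map (sMat p q).mulVecLin, M.mulVec x = 0) ∧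
      (LinearMap.range M.mulVecLin ≤ V) ∧
      ((1 / 2 : ℂ) • ((M - adjUpq p q M) * (M - adjUpq p q M)).mulVec u +
        (M - adjUpq p q M).mulVec v + w = 0) := by
  classical
  -- Euclidean decomposition of v along V
  set L := WithLp.linearEquiv 2 ℂ (Fin (p+q) → ℂ) with hL
  set V' : Submodule ℂ (EuclideanSpace ℂ (Fin (p+q))) := V.comap L.toLinearMap with hV'
  obtain ⟨v₀', hv₀', e', he', hdec⟩ := V'.exists_add_mem_mem_orthogonal (L.symm v)
  set v₀ : Fin (p+q) → ℂ := L v₀' with hv₀def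
  set e : Fin (p+q) → ℂ := L e' with hedef
  have hv₀V : v₀ ∈ V := hv₀'
  have hvdec : v = v₀ + e := by
    have := congrArg L hdec
    simpa [map_add] using this
  -- Euclidean orthogonality: ∀ x ∈ V, ∑ conj (e i) * x i = 0
  have hVe : ∀ x ∈ V, ∑ i : Fin (p+q), conj (e i) * x i = 0 := by
    intro x hx
    have hx' : L.symm x ∈ V' := by simpa [hV'] using hx
    have h0 := (Submodule.mem_orthogonal V' e').mp he' (L.symm x) hx'
    have : (inner ℂ (L.symm x) e' : ℂ) = ∑ i : Fin (p+q), conj (x i) * e i := by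
      simp [PiLp.inner_apply, RCLike.inner_apply]
      exact Finset.sum_congr rfl fun i _ => mul_comm _ _
    rw [this] at h0
    have := congrArg conj h0
    simpa [map_sum, map_mul, Complex.conj_conj, mul_comm] using this
  -- herm-orthogonality of e against V
  have hVherm : ∀ x ∈ V, herm p q x e = 0 := by
    intro x hx
    have h1 : herm p q x v = herm p q x v₀ + herm p q x e := by
      rw [hvdec, herm_add_right]
    rw [hv1 x hx, hV x hx v₀ hv₀V, zero_add] at h1
    exact h1.symm
  -- e vanishes on the first p coordinates
  have hep : ∀ i : Fin (p+q), i.1 < p → e i = 0 := by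
    obtain ⟨x, hxV, hxe⟩ := exists_matching_head p q V hV hVmax e
    have hA : ∑ i : Fin (p+q), conj (x i) * e i = 0 := by
      have := congrArg conj (hVe x hxV)
      simpa [map_sum, map_mul, Complex.conj_conj, mul_comm] using this
    have hB := hVherm x hxV
    rw [herm_apply] at hB
    have hkey : ∑ i : Fin (p+q),
        (if i.1 < p then ((2 * Complex.normSq (e i) : ℝ) : ℂ) else 0) = 0 := by
      have hsplit : ∀ i : Fin (p+q),
          (if i.1 < p then ((2 * Complex.normSq (e i) : ℝ) : ℂ) else 0)
          = conj (x i) * e i - (if i.1 < p then (-1:ℂ) else 1) * (conj (x i) * e i) := by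
        intro i
        by_cases hi : i.1 < p
        · simp only [hi, if_pos, hxe i hi]
          rw [← Complex.normSq_eq_conj_mul_self]
          push_cast
          ring
        · simp [hi]
      rw [Finset.sum_congr rfl (fun i _ => hsplit i), Finset.sum_sub_distrib, hA, hB, sub_zero]
    have hre : ∑ i : Fin (p+q), (if i.1 < p then 2 * Complex.normSq (e i) else 0) = 0 := by
      have := congrArg Complex.re hkey
      simpa [Complex.re_sum, apply_ite Complex.re] using this
    have hall := (Finset.sum_eq_zero_iff_of_nonneg (by
      intro i _
      by_cases hi : i.1 < p <;> simp [hi, Complex.normSq_nonneg])).mp hre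
    intro i hi
    have := hall i (Finset.mem_univ i)
    rw [if_pos hi] at this
    have : Complex.normSq (e i) = 0 := by linarith
    exact Complex.normSq_eq_zero.mp this
  -- the positive scalar t
  set t : ℂ := dotProduct (star e) e with htdef
  have htsum : t = ∑ i : Fin (p+q), conj (e i) * e i := by
    simp [htdef, dotProduct]
  have htreal : t = ((∑ i : Fin (p+q), Complex.normSq (e i) : ℝ) : ℂ) := by
    rw [htsum]
    push_cast
    exact Finset.sum_congr rfl fun i _ => (Complex.normSq_eq_conj_mul_self).symm ▸ rfl
  have hconjt : conj t = t := by rw [htreal]; exact Complex.conj_ofReal _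
  have hene : e ≠ 0 := by
    intro h
    exact hv2 (by rw [hvdec, h, add_zero]; exact hv₀V)
  have ht0 : t ≠ 0 := by
    rw [htreal]
    intro h
    have h2 : (∑ i : Fin (p+q), Complex.normSq (e i) : ℝ) = 0 := by exact_mod_cast h
    have hall := (Finset.sum_eq_zero_iff_of_nonneg (by
      intro i _; exact Complex.normSq_nonneg _)).mp h2
    exact hene (funext fun i => Complex.normSq_eq_zero.mp (hall i (Finset.mem_univ i)))
  -- herm e e = t
  have hermee : herm p q e e = t := by
    rw [herm_apply, htsum]
    refine Finset.sum_congr rfl fun i _ => ?_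
    by_cases hi : i.1 < p
    · simp [hi, hep i hi]
    · simp [hi]
  -- herm v v = t
  have hermev₀ : herm p q e v₀ = 0 := by
    rw [herm_conj, hVherm v₀ hv₀V, map_zero]
  have hermvv : herm p q v v = t := by
    rw [hvdec]
    have expand : herm p q (v₀ + e) (v₀ + e)
        = herm p q (v₀ + e) v₀ + herm p q (v₀ + e) e := herm_add_right p q _ _ _
    have l1 : herm p q (v₀ + e) v₀ = conj (herm p q v₀ (v₀ + e)) := herm_conj p q _ _
    have l2 : herm p q v₀ (v₀ + e) = 0 := by
      rw [herm_add_right, hV v₀ hv₀V v₀ hv₀V, hVherm v₀ hv₀V, add_zero]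
    have l3 : herm p q (v₀ + e) e = conj (herm p q e (v₀ + e)) := herm_conj p q _ _
    have l4 : herm p q e (v₀ + e) = t := by
      rw [herm_add_right, hermev₀, hermee, zero_add]
    rw [expand, l1, l2, l3, l4, map_zero, zero_add, hconjt]
  -- herm w u = -(t/2)
  have hermuw : herm p q u w = -(t/2) := by
    linear_combination hrel / 2 - hermvv / 2
  have hermwu : herm p q w u = -(t/2) := by
    rw [herm_conj, hermuw]
    simp only [map_neg, map_div₀, hconjt, Complex.conj_ofNat]
  -- the matrix M
  set γ : ℂ := (-2) / t with hγdef
  set b : Fin (p+q) → ℂ := γ • w with hbdef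
  have hbV : b ∈ V := Submodule.smul_mem V γ hw
  set M : Matrix (Fin (p+q)) (Fin (p+q)) ℂ := Matrix.vecMulVec b (star e) with hMdef
  -- dot products with star e
  have hdotV : ∀ x ∈ V, dotProduct (star e) x = 0 := by
    intro x hx
    simpa [dotProduct] using hVe x hx
  have hdotSV : ∀ y ∈ V, dotProduct (star e) ((sMat p q).mulVec y) = 0 := by
    intro y hy
    have : dotProduct (star e) ((sMat p q).mulVec y)
        = dotProduct (star e) y := by
      simp only [dotProduct, sMat, Matrix.mulVec_diagonal, Pi.star_apply]
      refine Finset.sum_congr rfl fun i _ => ?_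
      by_cases hi : i.1 < p
      · simp [hi, hep i hi]
      · simp [hi]
    rw [this]
    exact hdotV y hy
  refine ⟨M, ?_, ?_, ?_⟩
  · -- M kills V ⊔ sV
    intro x hx
    rcases Submodule.mem_sup.mp hx with ⟨a, ha, b', hb', rfl⟩
    rcases Submodule.mem_map.mp hb' with ⟨y, hy, rfl⟩
    rw [hMdef, vecMulVec_mulVec']
    have : dotProduct (star e) (a + (sMat p q).mulVecLin y) = 0 := by
      rw [dotProduct_add, hdotV a ha, Matrix.mulVecLin_apply, hdotSV y hy, add_zero]
    rw [this, zero_smul]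
  · -- range M ⊆ V
    rintro z ⟨x, rfl⟩
    rw [Matrix.mulVecLin_apply, hMdef, vecMulVec_mulVec']
    exact Submodule.smul_mem V _ hbV
  · -- the main equation
    set c' : Fin (p+q) → ℂ := fun j => (if j.1 < p then (-1:ℂ) else 1) * conj (b j) with hc'def
    have hAdj : adjUpq p q M = Matrix.vecMulVec e c' := by
      ext i j
      simp only [adjUpq, sMat, hMdef, Matrix.mul_diagonal, Matrix.diagonal_mul,
        Matrix.conjTranspose_apply, Matrix.vecMulVec_apply, hc'def, Pi.star_apply,
        RCLike.star_def, map_mul, Complex.conj_conj]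
      by_cases hi : i.1 < p
      · simp [hi, hep i hi]
      · by_cases hj : j.1 < p <;> simp [hi, hj] <;> ring
    have hN : ∀ x, (M - adjUpq p q M) *ᵥ x
        = (dotProduct (star e) x) • b - (dotProduct c' x) • e := by
      intro x
      rw [Matrix.sub_mulVec, hAdj, hMdef, vecMulVec_mulVec', vecMulVec_mulVec']
    have hc' : ∀ x, dotProduct c' x = conj γ * herm p q w x := by
      intro x
      rw [herm_apply, Finset.mul_sum]
      refine Finset.sum_congr rfl fun j _ => ?_
      simp only [hc'def, hbdef, Pi.smul_apply, smul_eq_mul, map_mul]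
      ring
    have hermwe : herm p q w e = 0 := hVherm w hw
    have hermwb : herm p q w b = 0 := by
      rw [hbdef, herm_smul_right, hV w hw w hw, mul_zero]
    have hconjγ : conj γ = γ := by
      rw [hγdef, map_div₀, map_neg, Complex.conj_ofNat, hconjt]
    have hc'v : dotProduct c' v = 0 := by rw [hc', hv1 w hw, mul_zero]
    have hc'e : dotProduct c' e = 0 := by rw [hc', hermwe, mul_zero]
    have hc'b : dotProduct c' b = 0 := by rw [hc', hermwb, mul_zero]
    have hc'u : dotProduct c' u = 1 := by
      rw [hc', hermwu, hconjγ, hγdef]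
      field_simp
    have hev : dotProduct (star e) v = t := by
      rw [hvdec, dotProduct_add, hdotV v₀ hv₀V, zero_add, htdef]
    have heb : dotProduct (star e) b = 0 := by
      rw [hbdef, dotProduct_smul, hdotV w hw, smul_zero]
    have hee : dotProduct (star e) e = t := htdef.symm
    have hteb : t • b = (-2:ℂ) • w := by
      rw [hbdef, smul_smul, hγdef]
      congr 1
      field_simp
      try ring
    have h1 : (M - adjUpq p q M) *ᵥ v = (-2:ℂ) • w := by
      rw [hN v, hc'v, hev, zero_smul, sub_zero, hteb]
    have hNb : (M - adjUpq p q M) *ᵥ b = 0 := by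
      rw [hN b, heb, hc'b, zero_smul, zero_smul, sub_zero]
    have hNe : (M - adjUpq p q M) *ᵥ e = (-2:ℂ) • w := by
      rw [hN e, hee, hc'e, zero_smul, sub_zero, hteb]
    have h2 : (M - adjUpq p q M) *ᵥ ((M - adjUpq p q M) *ᵥ u) = (2:ℂ) • w := by
      rw [hN u, hc'u, one_smul, Matrix.mulVec_sub, Matrix.mulVec_smul, hNb, hNe, smul_zero,
        zero_sub]
      funext i
      simp only [Pi.neg_apply, Pi.smul_apply, smul_eq_mul]
      ring
    rw [← Matrix.mulVec_mulVec, h2, h1, smul_smul]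
    norm_num
    funext i
    simp only [Pi.add_apply, Pi.smul_apply, Pi.neg_apply, smul_eq_mul, Pi.zero_apply, one_smul]
    ring
end

section
/- Let f: ℂ → M_n(ℂ) be holomorphic with f(λ) invertible for every λ ∈ ℂ, let α ∈ ℂ, and let N be an n×n complex matrix with N² = 0. Set f₁ = f'(α)f(α)^{−1}, assume Id + Nf₁ is invertible, and define Ñ = f(α)^{−1}(Id + Nf₁)^{−1}Nf(α). Then: (i) Ñ² = 0; and (ii) the function λ ↦ (Id + (λ−α)^{−1}N) · f(λ) · (Id − (λ−α)^{−1}Ñ), defined on ℂ ∖ {α}, extends to a holomorphic function on all of ℂ whose values are invertible matrices. -/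
set_option synthInstance.maxHeartbeats 1000000
set_option maxHeartbeats 1000000

open scoped Matrix

open Polynomial in
lemma det_one_add_of_nilpotent {m : Type*} [Fintype m] [DecidableEq m]
    (M : Matrix m m ℂ) (h : IsNilpotent M) : (1 + M).det = 1 := by
  have hcp : M.charpoly = X ^ (Fintype.card m) := by
    rw [← sub_eq_zero]
    exact (Matrix.isNilpotent_charpoly_sub_pow_of_isNilpotent h).eq_zero
  have hev := congrArg (Polynomial.eval (-1 : ℂ)) hcp
  rw [Matrix.charpoly, ← coe_evalRingHom, RingHom.map_det] at hev
  have hmap : (evalRingHom (-1 : ℂ)).mapMatrix (Matrix.charmatrix M) = -(1 + M) := by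
    ext i j
    by_cases hij : i = j
    · subst hij
      simp [Matrix.charmatrix_apply_eq, Matrix.one_apply]; ring
    · simp [Matrix.charmatrix_apply_ne _ _ _ hij, Matrix.one_apply, hij]
  rw [hmap, Matrix.det_neg, map_pow] at hev
  simp only [coe_evalRingHom, eval_X] at hev
  have : ((-1 : ℂ) ^ Fintype.card m) ≠ 0 := pow_ne_zero _ (by norm_num)
  exact mul_left_cancel₀ this (by simpa using hev)

lemma diff_dslope {g : ℂ → ℂ} (hg : Differentiable ℂ g) (a : ℂ) :
    Differentiable ℂ (dslope g a) := by
  intro b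
  rcases eq_or_ne b a with rfl | hb
  · obtain ⟨p, hp⟩ := hg.analyticAt b
    exact hp.has_fpower_series_dslope_fslope.differentiableAt
  · exact (differentiableAt_dslope_of_ne hb).mpr (hg b)

lemma entry_diff_mul {n : ℕ} {g k : ℂ → Matrix (Fin n) (Fin n) ℂ}
    (hg : ∀ i j, Differentiable ℂ fun l => g l i j)
    (hk : ∀ i j, Differentiable ℂ fun l => k l i j) :
    ∀ i j, Differentiable ℂ fun l => (g l * k l) i j := by
  intro i j
  simp only [Matrix.mul_apply]
  exact Differentiable.fun_sum fun x _ => (hg i x).mul (hk x j)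

/-- **Nilpotent dressing with a simple pole (Proposition 5.1).**
Let `f : ℂ → M_n(ℂ)` be holomorphic (entrywise) with invertible values, `α ∈ ℂ`, and `N`
with `N² = 0`.  Set `f₁ = f'(α) f(α)⁻¹`, assume `Id + N f₁` is invertible and put
`Nt = f(α)⁻¹ (Id + N f₁)⁻¹ N f(α)`.  Then `Nt² = 0`, and
`λ ↦ (Id + (λ-α)⁻¹ N) f(λ) (Id - (λ-α)⁻¹ Nt)` extends from `ℂ ∖ {α}` to a holomorphic
function on `ℂ` with invertible values. -/
theorem nilpotent_dressing_simple_pole (n : ℕ)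
    (f : ℂ → Matrix (Fin n) (Fin n) ℂ)
    (hf : ∀ i j, Differentiable ℂ fun l => f l i j)
    (hfinv : ∀ l : ℂ, IsUnit (f l))
    (α : ℂ) (N : Matrix (Fin n) (Fin n) ℂ) (hN : N * N = 0)
    (f₁ : Matrix (Fin n) (Fin n) ℂ)
    (hf₁ : f₁ = (Matrix.of fun i j => deriv (fun l => f l i j) α) * (f α)⁻¹)
    (hunit : IsUnit (1 + N * f₁))
    (Nt : Matrix (Fin n) (Fin n) ℂ)
    (hNt : Nt = (f α)⁻¹ * (1 + N * f₁)⁻¹ * N * f α) :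
    Nt * Nt = 0 ∧
    ∃ h : ℂ → Matrix (Fin n) (Fin n) ℂ,
      (∀ i j, Differentiable ℂ fun l => h l i j) ∧
      (∀ l : ℂ, IsUnit (h l)) ∧
      ∀ l : ℂ, l ≠ α →
        h l = (1 + (l - α)⁻¹ • N) * f l * (1 - (l - α)⁻¹ • Nt) := by
  classical
  set A := f α with hA
  set V := (1 + N * f₁)⁻¹ with hV
  have hAdet : IsUnit A.det := (Matrix.isUnit_iff_isUnit_det _).mp (hfinv α)
  have hAAinv : A * A⁻¹ = 1 := Matrix.mul_nonsing_inv _ hAdet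
  have hUdet : IsUnit (1 + N * f₁).det := (Matrix.isUnit_iff_isUnit_det _).mp hunit
  have hUV : (1 + N * f₁) * V = 1 := Matrix.mul_nonsing_inv _ hUdet
  have hVeq : V = 1 - N * f₁ * V := by
    have h0 : V + N * f₁ * V = 1 := by rw [← hUV]; noncomm_ring
    linear_combination (norm := noncomm_ring) h0
  have hNVN : N * V * N = 0 := by
    have h2 : N * V * N = N * N - N * N * (f₁ * (V * N)) := by
      nth_rewrite 1 [hVeq]; noncomm_ring
    rw [h2, hN]; simp
  have hNt2 : Nt * Nt = 0 := by
    have h3 : Nt * Nt = A⁻¹ * V * (N * (A * A⁻¹) * V * N) * A := by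
      rw [hNt]; noncomm_ring
    have h4 : N * (A * A⁻¹) * V * N = 0 := by
      rw [hAAinv, show N * (1 : Matrix (Fin n) (Fin n) ℂ) * V * N = N * V * N by
        noncomm_ring, hNVN]
    rw [h3, h4]; simp
  have hNANt : N * A * Nt = 0 := by
    have h3 : N * A * Nt = N * (A * A⁻¹) * V * N * A := by rw [hNt]; noncomm_ring
    rw [h3, hAAinv, show N * (1 : Matrix (Fin n) (Fin n) ℂ) * V * N = N * V * N by
      noncomm_ring, hNVN]
    simp
  set D : Matrix (Fin n) (Fin n) ℂ := Matrix.of fun i j => deriv (fun l => f l i j) α with hD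
  have hkey : N * A = A * Nt + N * D * Nt := by
    have h1 : A * Nt = V * N * A := by
      rw [hNt, show A * (A⁻¹ * V * N * A) = (A * A⁻¹) * (V * N * A) by noncomm_ring,
        hAAinv, one_mul]
    have h2 : N * D * Nt = N * f₁ * (V * N * A) := by
      rw [hNt, hf₁]; noncomm_ring
    rw [h1, h2]
    calc N * A = ((1 + N * f₁) * V) * (N * A) := by rw [hUV, one_mul]
      _ = V * N * A + N * f₁ * (V * N * A) := by noncomm_ring
  set F : ℂ → Matrix (Fin n) (Fin n) ℂ :=
    fun l => Matrix.of fun i j => dslope (fun t => f t i j) α l with hF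
  set G : ℂ → Matrix (Fin n) (Fin n) ℂ :=
    fun l => Matrix.of fun i j => dslope (fun t => F t i j) α l with hG
  have hFdiff : ∀ i j, Differentiable ℂ fun l => F l i j := fun i j => diff_dslope (hf i j) α
  have hGdiff : ∀ i j, Differentiable ℂ fun l => G l i j := fun i j => diff_dslope (hFdiff i j) α
  have hFα : F α = D := by
    ext i j
    simp only [hF, hD, Matrix.of_apply]
    exact dslope_same _ _
  have hFl : ∀ l, f l = A + (l - α) • F l := by
    intro l
    ext i j
    have h5 := sub_smul_dslope (fun t => f t i j) α l
    simp only [smul_eq_mul] at h5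
    simp only [Matrix.add_apply, Matrix.smul_apply, hF, Matrix.of_apply, smul_eq_mul, hA]
    linear_combination -h5
  have hGl : ∀ l, F l = D + (l - α) • G l := by
    intro l
    ext i j
    have h5 := sub_smul_dslope (fun t => F t i j) α l
    simp only [smul_eq_mul] at h5
    have hFαij : F α i j = D i j := by rw [hFα]
    simp only [Matrix.add_apply, Matrix.smul_apply, hG, Matrix.of_apply, smul_eq_mul]
    linear_combination -h5 + hFαij
  set h : ℂ → Matrix (Fin n) (Fin n) ℂ :=
    fun l => f l + N * F l - F l * Nt - N * G l * Nt with hh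
  have hdiff : ∀ i j, Differentiable ℂ fun l => h l i j := by
    intro i j
    have h1 := entry_diff_mul (g := fun _ => N) (fun _ _ => differentiable_const _) hFdiff
    have h2 := entry_diff_mul hFdiff (k := fun _ => Nt) (fun _ _ => differentiable_const _)
    have h3 := entry_diff_mul (g := fun l => N * G l)
      (entry_diff_mul (g := fun _ => N) (fun _ _ => differentiable_const _) hGdiff)
      (k := fun _ => Nt) (fun _ _ => differentiable_const _)
    simp only [hh, Matrix.sub_apply, Matrix.add_apply]
    exact (((hf i j).add (h1 i j)).sub (h2 i j)).sub (h3 i j)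
  have heq : ∀ l : ℂ, l ≠ α →
      h l = (1 + (l - α)⁻¹ • N) * f l * (1 - (l - α)⁻¹ • Nt) := by
    intro l hl
    have hu : l - α ≠ 0 := sub_ne_zero.mpr hl
    set c : ℂ := (l - α)⁻¹ with hc
    have hcu : c * (l - α) = 1 := inv_mul_cancel₀ hu
    have p1 : c • (N * f l) = c • (N * A) + N * F l := by
      rw [hFl l, mul_add, Matrix.mul_smul, smul_add, smul_smul, hcu, one_smul]
    have p2 : c • (f l * Nt) = c • (A * Nt) + F l * Nt := by
      rw [hFl l, add_mul, Matrix.smul_mul, smul_add, smul_smul, hcu, one_smul]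
    have p3 : (c * c) • (N * f l * Nt) = c • (N * D * Nt) + N * G l * Nt := by
      have e : N * f l * Nt = (l - α) • (N * D * Nt) + ((l - α) * (l - α)) • (N * G l * Nt) := by
        rw [hFl l, hGl l]
        simp only [mul_add, add_mul, Matrix.mul_smul, Matrix.smul_mul, smul_add, smul_smul]
        rw [hNANt, zero_add]
      have c1 : (c * c) * (l - α) = c := by rw [mul_assoc, hcu, mul_one]
      have c2 : (c * c) * ((l - α) * (l - α)) = 1 := by
        rw [mul_mul_mul_comm, hcu, one_mul]
      rw [e, smul_add, smul_smul, smul_smul, c1, c2, one_smul]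
    have hkey' : c • (N * A) = c • (A * Nt) + c • (N * D * Nt) := by
      rw [← smul_add, ← hkey]
    have expand : (1 + c • N) * f l * (1 - c • Nt)
        = f l + c • (N * f l) - (c • (f l * Nt) + (c * c) • (N * f l * Nt)) := by
      simp only [add_mul, one_mul, mul_sub, mul_one, Matrix.mul_smul, Matrix.smul_mul,
        smul_smul]
    rw [expand, p1, p2, p3, hkey', hh]
    abel_nf
  have hcont : Continuous fun l => (h l).det :=
    Continuous.matrix_det (continuous_matrix fun i j => (hdiff i j).continuous)
  have hfcont : Continuous fun l => (f l).det :=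
    Continuous.matrix_det (continuous_matrix fun i j => (hf i j).continuous)
  have hdets : (fun l => (h l).det) = fun l => (f l).det := by
    refine Continuous.ext_on (dense_compl_singleton α) hcont hfcont ?_
    intro l hl
    have hl' : l ≠ α := hl
    show (h l).det = (f l).det
    set c : ℂ := (l - α)⁻¹ with hc
    have hn1 : IsNilpotent (c • N) := by
      refine ⟨2, ?_⟩
      rw [pow_two, Matrix.smul_mul, Matrix.mul_smul, smul_smul, hN, smul_zero]
    have hn2 : IsNilpotent (-(c • Nt)) := by
      refine ⟨2, ?_⟩
      rw [pow_two, neg_mul_neg, Matrix.smul_mul, Matrix.mul_smul, smul_smul, hNt2, smul_zero]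
    have d1 : (1 + c • N).det = 1 := det_one_add_of_nilpotent _ hn1
    have d2 : (1 - c • Nt).det = 1 := by
      rw [sub_eq_add_neg]; exact det_one_add_of_nilpotent _ hn2
    rw [heq l hl', Matrix.det_mul, Matrix.det_mul, d1, d2, one_mul, mul_one]
  refine ⟨hNt2, h, hdiff, fun l => ?_, heq⟩
  refine (Matrix.isUnit_iff_isUnit_det _).mpr ?_
  rw [congrFun hdets l]
  exact (Matrix.isUnit_iff_isUnit_det _).mp (hfinv l)
end

section
/- Let α, β ∈ ℂ be distinct and let N, M be n×n complex matrices with N² = M² = 0. Assume Id + (α−β)^{−2}NM and Id + (β−α)^{−2}MN are invertible, and define N̂ = (Id + (α−β)^{−1}M)(Id + (α−β)^{−2}NM)^{−1}N(Id − (α−β)^{−1}M) and M̂ = (Id + (β−α)^{−1}N)(Id + (β−α)^{−2}MN)^{−1}M(Id − (β−α)^{−1}N). Then for every λ ∈ ℂ ∖ {α, β}, (Id + (λ−β)^{−1}M̂)(Id + (λ−α)^{−1}N) = (Id + (λ−α)^{−1}N̂)(Id + (λ−β)^{−1}M). -/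
/-!
Write `a = (λ - α)⁻¹`, `b = (λ - β)⁻¹` and `c = (α - β)⁻¹`. Multiplying out, the difference of the
two sides is `a • (N - N̂) + b • (M̂ - M) + (a * b) • P` with `P = M̂ N - N̂ M`, and partial fractions
give `a * b = c * (a - b)`; so it suffices that `N̂ - N = c • P = M̂ - M`.

Put `X = (1 + c² N M)⁻¹ N` and `Y = (1 + c² M N)⁻¹ M`. The intertwining
`M (1 + c² N M) = (1 + c² M N) M` passes to the inverses and gives `M X = Y N`, and then
`(1 + c² N M) X = N` reads `X = N - c² N Y N`. With these two relations and `N² = M² = 0`, expanding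
`N̂ = (1 + c M) X (1 - c M)` and `M̂ = (1 - c N) Y (1 + c N)` yields `N̂ - N = c • P`. The identity
`M̂ - M = c • P` is the same statement with `(N, M, c)` replaced by `(M, N, -c)`.
-/

open scoped Ring

theorem Ring.inverse_mul_eq_mul_inverse {M₀ : Type*} [MonoidWithZero M₀] {u v x : M₀}
    (hu : IsUnit u) (hv : IsUnit v) (h : x * v = u * x) : u⁻¹ʳ * x = x * v⁻¹ʳ :=
  calc u⁻¹ʳ * x = u⁻¹ʳ * (x * v) * v⁻¹ʳ := by rw [mul_assoc, Ring.mul_inverse_cancel_right _ _ hv]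
    _ = x * v⁻¹ʳ := by rw [h, Ring.inverse_mul_cancel_left _ _ hu]

theorem inv_sub_mul_inv_sub {K : Type*} [Field K] {l α β : K} (hlα : l ≠ α) (hlβ : l ≠ β)
    (hαβ : α ≠ β) : (l - α)⁻¹ * (l - β)⁻¹ = (α - β)⁻¹ * ((l - α)⁻¹ - (l - β)⁻¹) := by
  have hα : l - α ≠ 0 := sub_ne_zero.mpr hlα
  have hβ : l - β ≠ 0 := sub_ne_zero.mpr hlβ
  have hαβ' : α - β ≠ 0 := sub_ne_zero.mpr hαβ
  field_simp
  ring

section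

variable {K R : Type*} [CommRing K] [Ring R] [Algebra K R]

theorem permutability_of_sub_eq_smul {a b c : K} {N M Nh Mh : R} (hab : a * b = c * (a - b))
    (hN : Nh - N = c • (Mh * N - Nh * M)) (hM : Mh - M = c • (Mh * N - Nh * M)) :
    (1 + b • Mh) * (1 + a • N) = (1 + a • Nh) * (1 + b • M) := by
  have hexpand : (1 + b • Mh) * (1 + a • N) - (1 + a • Nh) * (1 + b • M) =
      b • (Mh - M) - a • (Nh - N) + (a * b) • (Mh * N - Nh * M) := by
    simp only [mul_add, add_mul, mul_one, one_mul, smul_mul_assoc, mul_smul_comm]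
    module
  rw [← sub_eq_zero, hexpand, hN, hM, hab]
  module

theorem mul_one_add_smul_mul (t : K) (x y : R) :
    x * (1 + t • (y * x)) = (1 + t • (x * y)) * x := by
  simp only [mul_add, add_mul, mul_one, one_mul, mul_smul_comm, smul_mul_assoc, mul_assoc]

/-- When `M * M = 0`, `1 - c • M` is the inverse of `1 + c • M`, so this is a conjugation. -/
def conjOneAddSmul (c : K) (M X : R) : R :=
  (1 + c • M) * X * (1 - c • M)

theorem conjOneAddSmul_eq (c : K) (M X : R) :
    conjOneAddSmul c M X = X + c • (M * X) - c • (X * M) - c ^ 2 • (M * (X * M)) := by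
  simp only [conjOneAddSmul, add_mul, mul_sub, mul_one, one_mul, smul_mul_assoc, mul_smul_comm,
    mul_assoc]
  module

theorem conjOneAddSmul_mul_of_mul_self_eq_zero (c : K) {M : R} (X : R) (hM : M * M = 0) :
    conjOneAddSmul c M X * M = X * M + c • (M * (X * M)) := by
  rw [conjOneAddSmul_eq]
  simp only [sub_mul, add_mul, smul_mul_assoc, mul_assoc, hM, mul_zero, smul_zero, sub_zero]

theorem conjOneAddSmul_sub_eq_smul {c : K} {N M X Y : R} (hN : N * N = 0) (hM : M * M = 0)
    (hMX : M * X = Y * N) (hX : X = N - c ^ 2 • (N * (Y * N))) :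
    conjOneAddSmul c M X - N =
      c • (conjOneAddSmul (-c) N Y * N - conjOneAddSmul c M X * M) := by
  rw [conjOneAddSmul_mul_of_mul_self_eq_zero _ _ hN, conjOneAddSmul_mul_of_mul_self_eq_zero _ _ hM,
    conjOneAddSmul_eq, hMX]
  linear_combination (norm := module) hX

/-- `N̂` of the permutability formula, with `c = (α - β)⁻¹`; `M̂` is `permutabilityHat (-c) M N`. -/
noncomputable def permutabilityHat (c : K) (N M : R) : R :=
  conjOneAddSmul c M ((1 + c ^ 2 • (N * M))⁻¹ʳ * N)

theorem permutabilityHat_sub_eq_smul {c : K} {N M : R} (hN : N * N = 0) (hM : M * M = 0)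
    (hNM : IsUnit (1 + c ^ 2 • (N * M))) (hMN : IsUnit (1 + c ^ 2 • (M * N))) :
    permutabilityHat c N M - N =
      c • (permutabilityHat (-c) M N * N - permutabilityHat c N M * M) := by
  set X := (1 + c ^ 2 • (N * M))⁻¹ʳ * N
  set Y := (1 + c ^ 2 • (M * N))⁻¹ʳ * M
  have hMX : M * X = Y * N := by
    rw [← mul_assoc, ← Ring.inverse_mul_eq_mul_inverse hMN hNM (mul_one_add_smul_mul _ _ _)]
  have hX : X = N - c ^ 2 • (N * (Y * N)) := by
    have hAX : (1 + c ^ 2 • (N * M)) * X = N := Ring.mul_inverse_cancel_left _ _ hNM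
    rw [add_mul, one_mul, smul_mul_assoc, mul_assoc, hMX] at hAX
    exact eq_sub_of_add_eq hAX
  rw [permutabilityHat, permutabilityHat, neg_sq]
  exact conjOneAddSmul_sub_eq_smul hN hM hMX hX

theorem permutabilityHat_neg_sub_eq_smul {c : K} {N M : R} (hN : N * N = 0) (hM : M * M = 0)
    (hNM : IsUnit (1 + c ^ 2 • (N * M))) (hMN : IsUnit (1 + c ^ 2 • (M * N))) :
    permutabilityHat (-c) M N - M =
      c • (permutabilityHat (-c) M N * N - permutabilityHat c N M * M) := by
  rw [← neg_sq] at hNM hMN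
  rw [permutabilityHat_sub_eq_smul hM hN hMN hNM, neg_neg, neg_smul, ← smul_neg, neg_sub]

end

/-- **Permutability formula (Proposition 5.4).**  For `α ≠ β`, `N² = M² = 0` and
`N̂ = (Id + (α-β)⁻¹ M)(Id + (α-β)⁻² N M)⁻¹ N (Id - (α-β)⁻¹ M)`,
`M̂ = (Id + (β-α)⁻¹ N)(Id + (β-α)⁻² M N)⁻¹ M (Id - (β-α)⁻¹ N)`,
one has `m_{β,1,M̂} m_{α,1,N} = m_{α,1,N̂} m_{β,1,M}` away from `α` and `β`. -/
theorem permutability (n : ℕ) (α β : ℂ) (hαβ : α ≠ β)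
    (N M : Matrix (Fin n) (Fin n) ℂ) (hN : N * N = 0) (hM : M * M = 0)
    (hNM : IsUnit (1 + ((α - β)⁻¹) ^ 2 • (N * M)))
    (hMN : IsUnit (1 + ((β - α)⁻¹) ^ 2 • (M * N)))
    (Nh Mh : Matrix (Fin n) (Fin n) ℂ)
    (hNh : Nh = (1 + (α - β)⁻¹ • M) * (1 + ((α - β)⁻¹) ^ 2 • (N * M))⁻¹ * N *
      (1 - (α - β)⁻¹ • M))
    (hMh : Mh = (1 + (β - α)⁻¹ • N) * (1 + ((β - α)⁻¹) ^ 2 • (M * N))⁻¹ * M *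
      (1 - (β - α)⁻¹ • N)) :
    ∀ l : ℂ, l ≠ α → l ≠ β →
      (1 + (l - β)⁻¹ • Mh) * (1 + (l - α)⁻¹ • N) =
      (1 + (l - α)⁻¹ • Nh) * (1 + (l - β)⁻¹ • M) := by
  intro l hlα hlβ
  have hβα : (β - α)⁻¹ = -(α - β)⁻¹ := by rw [← inv_neg, neg_sub]
  rw [hβα] at hMN hMh
  rw [neg_sq] at hMN
  have hNh' : Nh = permutabilityHat (α - β)⁻¹ N M := by
    rw [hNh, permutabilityHat, conjOneAddSmul, Matrix.nonsing_inv_eq_ringInverse, mul_assoc _ _ N]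
  have hMh' : Mh = permutabilityHat (-(α - β)⁻¹) M N := by
    rw [hMh, permutabilityHat, conjOneAddSmul, Matrix.nonsing_inv_eq_ringInverse, mul_assoc _ _ M]
  rw [hNh', hMh']
  exact permutability_of_sub_eq_smul (inv_sub_mul_inv_sub hlα hlβ hαβ)
    (permutabilityHat_sub_eq_smul hN hM hNM hMN) (permutabilityHat_neg_sub_eq_smul hN hM hNM hMN)
end

section
/- Let α ∈ ℝ, α ≠ 0, and let N be a real n×n matrix with N² = 0 such that Id + (1/(4α²))NᵗN is invertible. Define N' = (Id − (1/(2α))N)(Id + (1/(4α²))NᵗN)^{−1}Nᵗ(Id + (1/(2α))N) and s_{α,N}(λ) = (Id + (λ+α)^{−1}N')(Id + (λ−α)^{−1}N). Then for every λ ∈ ℂ ∖ {α, −α}: (i) conj(s_{α,N}(conj λ)) = s_{α,N}(λ) (the GL(n,ℝ)-reality condition), and (ii) s_{α,N}(−λ)ᵗ · s_{α,N}(λ) = Id (the GL(n)/O(n)-twisting condition σ(s(−λ)) = s(λ) for σ(A) = (Aᵗ)^{−1}). -/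
/-!
Put `c = 1/(2α)` and `M = (1 + c² NᵀN)⁻¹`. Because `N² = 0`, `M` fixes `N` (`MN = N`, `NᵀM = Nᵀ`),
and expanding `N' = (1 - cN) M Nᵀ (1 + cN)` shows that `N' + N` is symmetric and that
`N'ᵀ (1 + cN') = (1 + cNᵀ) N`. With `a = (λ+α)⁻¹`, `b = (λ-α)⁻¹` these two identities and the
partial-fraction relation `ab = c(b - a)` let the middle factors of
`s(-λ)ᵀ s(λ) = (1 - aNᵀ)(1 - bN'ᵀ)(1 + aN')(1 + bN)` be replaced by `(1 + aNᵀ)(1 - bN)`, after which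
the product collapses since `(1 - xX)(1 + xX) = 1` whenever `X² = 0`. Reality is clear because
`N`, `N'` and the poles `±α` are real.
-/

open scoped Matrix ComplexConjugate

theorem one_sub_smul_mul_one_add_smul_of_mul_self_eq_zero {R A : Type*} [CommSemiring R]
    [Ring A] [Algebra R A] {X : A} (hX : X * X = 0) (r : R) :
    (1 - r • X) * (1 + r • X) = 1 := by
  simp only [sub_mul, mul_add, one_mul, mul_one, smul_mul_smul_comm, hX, smul_zero]
  abel

namespace Matrix

theorem map_starRingEnd_one_add_smul_map_ofReal {ι : Type*} [DecidableEq ι] (x : ℂ)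
    (A : Matrix ι ι ℝ) :
    (1 + x • A.map Complex.ofReal).map (starRingEnd ℂ) = 1 + conj x • A.map Complex.ofReal := by
  ext i j
  simp [one_apply, apply_ite (starRingEnd ℂ)]

variable {ι R : Type*} [Fintype ι] [DecidableEq ι] [CommRing R]

theorem commute_nonsing_inv_of_commute {G Y : Matrix ι ι R} (hG : IsUnit G) (h : Commute G Y) :
    Commute G⁻¹ Y := by
  obtain ⟨u, rfl⟩ := hG
  rw [← coe_units_inv]
  exact h.units_inv_left

variable {c : R} {N : Matrix ι ι R}

theorem isSymm_inv_one_add_smul_transpose_mul_self :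
    ((1 + c ^ 2 • (Nᵀ * N))⁻¹).IsSymm := by
  simp [IsSymm, transpose_nonsing_inv, transpose_add, transpose_smul, transpose_mul]

theorem inv_one_add_smul_transpose_mul_self_mul (hN : N * N = 0)
    (hG : IsUnit (1 + c ^ 2 • (Nᵀ * N))) : (1 + c ^ 2 • (Nᵀ * N))⁻¹ * N = N := by
  have hGN : (1 + c ^ 2 • (Nᵀ * N)) * N = N := by
    rw [add_mul, one_mul, smul_mul, mul_assoc, hN, mul_zero, smul_zero, add_zero]
  simpa only [hGN] using nonsing_inv_mul_cancel_left _ N ((isUnit_iff_isUnit_det _).1 hG)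

theorem transpose_mul_inv_one_add_smul_transpose_mul_self (hN : N * N = 0)
    (hG : IsUnit (1 + c ^ 2 • (Nᵀ * N))) : Nᵀ * (1 + c ^ 2 • (Nᵀ * N))⁻¹ = Nᵀ := by
  simpa [isSymm_inv_one_add_smul_transpose_mul_self.eq] using
    congrArg transpose (inv_one_add_smul_transpose_mul_self_mul hN hG)

/-- The paper's `N'`, with `c = 1/(2α)`. -/
noncomputable def twistedResidue (c : R) (N : Matrix ι ι R) : Matrix ι ι R :=
  (1 - c • N) * (1 + c ^ 2 • (Nᵀ * N))⁻¹ * Nᵀ * (1 + c • N)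

theorem isSymm_twistedResidue_add (hG : IsUnit (1 + c ^ 2 • (Nᵀ * N))) :
    (twistedResidue c N + N).IsSymm := by
  set M := (1 + c ^ 2 • (Nᵀ * N))⁻¹ with hM
  have hMsymm : Mᵀ = M := isSymm_inv_one_add_smul_transpose_mul_self.eq
  have hMX : Commute M (Nᵀ * N) :=
    commute_nonsing_inv_of_commute hG ((Commute.one_left _).add_left ((Commute.refl _).smul_left _))
  have hMG : M * (1 + c ^ 2 • (Nᵀ * N)) = 1 :=
    nonsing_inv_mul _ ((isUnit_iff_isUnit_det _).1 hG)
  have hrel : c ^ 2 • (M * (Nᵀ * N)) = 1 - M := by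
    rw [← hMG, mul_add, mul_one, Matrix.mul_smul]; abel
  have hNMX : c ^ 2 • (N * (M * (Nᵀ * N))) = N - N * M := by
    rw [← Matrix.mul_smul, hrel, mul_sub, mul_one]
  have hform : twistedResidue c N + N = M * Nᵀ + N * M + c • (M * (Nᵀ * N) - N * (M * Nᵀ)) := by
    simp only [twistedResidue, ← hM, sub_mul, mul_add, one_mul, mul_one, Matrix.smul_mul,
      Matrix.mul_smul, mul_assoc, smul_smul]
    linear_combination (norm := module) -hNMX
  rw [IsSymm, hform]
  simp only [transpose_add, transpose_smul, transpose_sub, transpose_mul, transpose_transpose,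
    hMsymm, hMX.eq, mul_assoc]
  abel

theorem transpose_twistedResidue_mul (hN : N * N = 0) (hG : IsUnit (1 + c ^ 2 • (Nᵀ * N))) :
    (twistedResidue c N)ᵀ * (1 + c • twistedResidue c N) = (1 + c • Nᵀ) * N := by
  set M := (1 + c ^ 2 • (Nᵀ * N))⁻¹ with hM
  have hMsymm : Mᵀ = M := isSymm_inv_one_add_smul_transpose_mul_self.eq
  have hMN : M * N = N := inv_one_add_smul_transpose_mul_self_mul hN hG
  have hNtM : Nᵀ * M = Nᵀ := transpose_mul_inv_one_add_smul_transpose_mul_self hN hG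
  have hMG : M * (1 + c ^ 2 • (Nᵀ * N)) = 1 :=
    nonsing_inv_mul _ ((isUnit_iff_isUnit_det _).1 hG)
  have hNtNt : Nᵀ * Nᵀ = 0 := by rw [← transpose_mul, hN, transpose_zero]
  have hNP : N * (1 + c • N) = N := by
    rw [mul_add, mul_one, Matrix.mul_smul, hN, smul_zero, add_zero]
  have htranspose : (twistedResidue c N)ᵀ = (1 + c • N)ᵀ * (N * M * (1 - c • N)ᵀ) := by
    simp only [twistedResidue, ← hM, transpose_mul, transpose_transpose, hMsymm, mul_assoc]
  have hconj : 1 + c • twistedResidue c N = (1 - c • N) * (1 + c • (M * Nᵀ)) * (1 + c • N) := by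
    rw [mul_add (1 - c • N) 1, mul_one, add_mul,
      one_sub_smul_mul_one_add_smul_of_mul_self_eq_zero hN c]
    simp only [twistedResidue, ← hM, Matrix.mul_smul, Matrix.smul_mul, mul_assoc]
  have hgram : N * M * ((1 - c • N)ᵀ * (1 - c • N)) = N - c • (N * M * Nᵀ) := by
    have hexpand : (1 - c • N)ᵀ * (1 - c • N) = (1 + c ^ 2 • (Nᵀ * N)) - c • Nᵀ - c • N := by
      simp only [transpose_sub, transpose_one, transpose_smul, sub_mul, mul_sub, one_mul,
        mul_one, smul_mul_smul_comm, ← sq]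
      abel
    rw [hexpand, mul_sub, mul_sub, mul_assoc N M, hMG, mul_one, Matrix.mul_smul, Matrix.mul_smul,
      mul_assoc N M N, hMN, hN, smul_zero, sub_zero]
  have hcancel : (N - c • (N * M * Nᵀ)) * (1 + c • (M * Nᵀ)) = N := by
    have hvanish : N * (M * (Nᵀ * (M * Nᵀ))) = 0 := by
      rw [← mul_assoc Nᵀ M Nᵀ, hNtM, hNtNt, mul_zero, mul_zero]
    simp only [sub_mul, mul_add, mul_one, smul_mul_smul_comm, Matrix.mul_smul, mul_assoc,
      hvanish, smul_zero]
    abel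
  calc (twistedResidue c N)ᵀ * (1 + c • twistedResidue c N)
      = (1 + c • N)ᵀ * (N * M * ((1 - c • N)ᵀ * (1 - c • N)) * (1 + c • (M * Nᵀ)))
          * (1 + c • N) := by
        rw [htranspose, hconj]; simp only [mul_assoc]
    _ = (1 + c • Nᵀ) * N := by
        rw [hgram, hcancel, mul_assoc, hNP, transpose_add, transpose_one, transpose_smul]

theorem one_sub_smul_transpose_mul_one_add_smul {A A' : Matrix ι ι R} {a b c : R}
    (hsymm : (A' + A).IsSymm) (hres : A'ᵀ * (1 + c • A') = (1 + c • Aᵀ) * A)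
    (hab : a * b = c * (b - a)) :
    (1 - b • A'ᵀ) * (1 + a • A') = (1 + a • Aᵀ) * (1 - b • A) := by
  have hsymm' : A'ᵀ + Aᵀ = A' + A := by simpa using hsymm.eq
  have hres' : A'ᵀ + c • (A'ᵀ * A') = A + c • (Aᵀ * A) := by
    simpa only [mul_add, add_mul, mul_one, one_mul, Matrix.mul_smul, Matrix.smul_mul] using hres
  simp only [sub_mul, mul_add, add_mul, mul_sub, one_mul, mul_one, smul_mul_smul_comm]
  linear_combination (norm := module)
    -(a • hsymm') - (b - a) • hres' - hab • (A'ᵀ * A' - Aᵀ * A)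

theorem transpose_mul_eq_one_of_isSymm_add {A A' : Matrix ι ι R} {a b c : R} (hA : A * A = 0)
    (hsymm : (A' + A).IsSymm) (hres : A'ᵀ * (1 + c • A') = (1 + c • Aᵀ) * A)
    (hab : a * b = c * (b - a)) :
    ((1 - b • A') * (1 - a • A))ᵀ * ((1 + a • A') * (1 + b • A)) = 1 := by
  have hAt : Aᵀ * Aᵀ = 0 := by rw [← transpose_mul, hA, transpose_zero]
  calc ((1 - b • A') * (1 - a • A))ᵀ * ((1 + a • A') * (1 + b • A))
      = (1 - a • Aᵀ) * ((1 - b • A'ᵀ) * (1 + a • A')) * (1 + b • A) := by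
        simp only [transpose_mul, transpose_sub, transpose_one, transpose_smul, mul_assoc]
    _ = (1 - a • Aᵀ) * (1 + a • Aᵀ) * ((1 - b • A) * (1 + b • A)) := by
        rw [one_sub_smul_transpose_mul_one_add_smul hsymm hres hab]; simp only [mul_assoc]
    _ = 1 := by
        rw [one_sub_smul_mul_one_add_smul_of_mul_self_eq_zero hAt,
          one_sub_smul_mul_one_add_smul_of_mul_self_eq_zero hA, one_mul]

end Matrix

/-- **The twisted simple elements `s_{α,N}` (Corollary 5.5).**
For `α ∈ ℝ ∖ {0}` and a real matrix `N` with `N² = 0` such that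
`Id + (1/(4α²)) Nᵗ N` is invertible, put
`N' = (Id - (1/(2α)) N)(Id + (1/(4α²)) Nᵗ N)⁻¹ Nᵗ (Id + (1/(2α)) N)` and
`s_{α,N}(λ) = (Id + (λ+α)⁻¹ N')(Id + (λ-α)⁻¹ N) = m_{-α,1,N'} m_{α,1,N}`.
Then `s_{α,N}` satisfies the `GL(n,ℝ)`-reality condition `conj(s(λ̄)) = s(λ)` and the
`GL(n)/O(n)`-twisting condition `s(-λ)ᵗ s(λ) = Id`. -/
theorem s_alpha_N_real_and_twisted (n : ℕ) (α : ℝ) (hα : α ≠ 0)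
    (N : Matrix (Fin n) (Fin n) ℝ) (hN : N * N = 0)
    (hinv : IsUnit ((1 : Matrix (Fin n) (Fin n) ℝ) + (1 / (4 * α ^ 2)) • (Nᵀ * N)))
    (N' : Matrix (Fin n) (Fin n) ℝ)
    (hN' : N' = (1 - (1 / (2 * α)) • N) * (1 + (1 / (4 * α ^ 2)) • (Nᵀ * N))⁻¹ * Nᵀ *
      (1 + (1 / (2 * α)) • N))
    (s : ℂ → Matrix (Fin n) (Fin n) ℂ)
    (hs : ∀ l : ℂ, s l = (1 + (l + (α : ℂ))⁻¹ • N'.map (Complex.ofReal)) *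
      (1 + (l - (α : ℂ))⁻¹ • N.map (Complex.ofReal))) :
    ∀ l : ℂ, l ≠ (α : ℂ) → l ≠ -(α : ℂ) →
      ((s (conj l)).map (starRingEnd ℂ) = s l) ∧ (s (-l))ᵀ * s l = 1 := by
  intro l hl hl'
  rw [show (1 / (4 * α ^ 2) : ℝ) = (1 / (2 * α)) ^ 2 by ring] at hinv hN'
  have hsymm := Matrix.isSymm_twistedResidue_add hinv
  have hres := Matrix.transpose_twistedResidue_mul hN hinv
  rw [← show N' = Matrix.twistedResidue (1 / (2 * α)) N from hN'] at hsymm hres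
  have hsymmC := hsymm.map Complex.ofReal
  have hresC := congrArg Complex.ofRealHom.mapMatrix hres
  rw [Matrix.map_add _ Complex.ofReal_add] at hsymmC
  simp only [map_mul, map_add, map_one, RingHom.mapMatrix_apply, Matrix.transpose_map,
    Matrix.map_smul' _ _ _ (map_mul Complex.ofRealHom)] at hresC
  have hNC := congrArg Complex.ofRealHom.mapMatrix hN
  rw [map_mul, map_zero] at hNC
  refine ⟨by simp [hs, Matrix.map_mul, Matrix.map_starRingEnd_one_add_smul_map_ofReal], ?_⟩
  have hab : (l + α)⁻¹ * (l - α)⁻¹ = ((1 / (2 * α) : ℝ) : ℂ) * ((l - α)⁻¹ - (l + α)⁻¹) := by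
    have hlα : l - α ≠ 0 := sub_ne_zero.2 hl
    have hlα' : l + α ≠ 0 := by rwa [← sub_neg_eq_add, sub_ne_zero]
    have hαC : (α : ℂ) ≠ 0 := Complex.ofReal_ne_zero.2 hα
    push_cast
    field_simp
    ring
  rw [hs, hs, show -l + α = -(l - α) by ring, show -l - α = -(l + α) by ring, inv_neg, inv_neg,
    neg_smul, neg_smul, ← sub_eq_add_neg, ← sub_eq_add_neg]
  exact Matrix.transpose_mul_eq_one_of_isSymm_add hNC hsymmC hresC hab
end

section
/- Let f: ℂ → M_n(ℂ) be holomorphic with f(λ) invertible for every λ ∈ ℂ, let α ∈ ℂ, and let N be an n×n complex matrix with N² = 0. Write the power series expansion of f at α as f(λ) = ∑_{i≥0} f_i(λ−α)^i. Assume Nf₂ + f₀ is invertible, set X = (Nf₃ + f₁)(Nf₂ + f₀)^{−1}, assume Nf₂ + f₀ − XNf₁ is invertible, and define M₁ = (Nf₂ + f₀ − XNf₁)^{−1}(XNf₀ − Nf₁) and M₂ = −(Nf₂ + f₀)^{−1}(Nf₁M₁ + Nf₀). Then the function λ ↦ (Id + (λ−α)^{−2}N) · f(λ) · (Id + (λ−α)^{−1}M₁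 + (λ−α)^{−2}M₂), defined on ℂ ∖ {α}, extends holomorphically across α. -/
set_option synthInstance.maxHeartbeats 1000000
set_option maxHeartbeats 1000000

open scoped Matrix

/-- The `k`-th Taylor coefficient at `α` of a matrix-valued function, taken entrywise:
`f_k = f^{(k)}(α) / k!`. -/
noncomputable def taylorCoeff {n : ℕ} (f : ℂ → Matrix (Fin n) (Fin n) ℂ) (α : ℂ) (k : ℕ) :
    Matrix (Fin n) (Fin n) ℂ :=
  Matrix.of fun i j => iteratedDeriv k (fun l => f l i j) α / (k.factorial : ℂ)

/-!
Write `q = λ - α`. Iterating `dslope` gives `f(λ) = f₀ + q f₁ + q² f₂ + q³ f₃ + q⁴ R(λ)` with `R`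
entire. In the dressed product the coefficients of `q⁻², q⁻¹` are
`c₂ = N (f₀ + f₁ M₁ + f₂ M₂) + f₀ M₂` and `c₃ = N (f₁ + f₂ M₁ + f₃ M₂) + f₀ M₁ + f₁ M₂`, and since
`N² = 0` those of `q⁻⁴, q⁻³` are `N c₂, N c₃`. The formulas for `X, M₁, M₂` solve `c₂ = c₃ = 0`,
so the whole principal part vanishes and what is left is holomorphic.
-/

open Function Finset Nat

section
variable {𝕜 E : Type*} [NontriviallyNormedField 𝕜] [NormedAddCommGroup E] [NormedSpace 𝕜 E]

theorem eq_sum_add_pow_smul_iterate_dslope (u : 𝕜 → E) (a b : 𝕜) (m : ℕ) :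
    u b = ∑ k ∈ range m, (b - a) ^ k • (swap dslope a)^[k] u a
      + (b - a) ^ m • (swap dslope a)^[m] u b := by
  induction m with
  | zero => simp
  | succ m ih =>
    rw [sum_range_succ, iterate_succ_apply', pow_succ, mul_smul, swap, sub_smul_dslope,
      smul_sub]
    nth_rw 1 [ih]
    abel
end

section
variable {E : Type*} [NormedAddCommGroup E] [NormedSpace ℂ E] [CompleteSpace E] {u : ℂ → E}

theorem Differentiable.iterate_dslope (hu : Differentiable ℂ u) (a : ℂ) (k : ℕ) :
    Differentiable ℂ ((swap dslope a)^[k] u) := by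
  induction k with
  | zero => exact hu
  | succ k ih =>
    rw [iterate_succ_apply', ← differentiableOn_univ]
    exact (Complex.differentiableOn_dslope Filter.univ_mem).2 ih.differentiableOn

theorem Differentiable.iterate_dslope_apply_self (hu : Differentiable ℂ u) (a : ℂ) (k : ℕ) :
    (swap dslope a)^[k] u a = (k ! : ℂ)⁻¹ • iteratedDeriv k u a := by
  have hp := hu.hasFPowerSeriesOnBall a (R := 1) one_pos
  have hcoeff : (FormalMultilinearSeries.fslope^[k] (cauchyPowerSeries u a 1)).coeff 0 =
      (swap dslope a)^[k] u a :=
    (hp.hasFPowerSeriesAt.has_fpower_series_iterate_dslope_fslope k).coeff_zero 1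
  rw [← hcoeff, FormalMultilinearSeries.coeff_iterate_fslope, zero_add,
    iteratedDeriv_eq_iteratedFDeriv, ← hp.factorial_smul 1 k, ← Nat.cast_smul_eq_nsmul ℂ,
    inv_smul_smul₀ (Nat.cast_ne_zero.2 k.factorial_ne_zero)]
  rfl
end

section
variable {𝕜 A : Type*} [Field 𝕜] [Ring A] [Algebra 𝕜 A]

/-- `q⁻⁴ (N + q²) (f₀ + q f₁ + q² f₂ + q³ f₃ + q⁴ T) (M₂ + q M₁ + q²)` with its negative powers of
`q` dropped. -/
def dressedRegularPart (N f₀ f₁ f₂ f₃ M₁ M₂ T : A) (q : 𝕜) : A :=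
  N * f₂ + N * f₃ * M₁ + f₀ + f₁ * M₁ + f₂ * M₂ + q • (N * f₃ + f₁ + f₂ * M₁ + f₃ * M₂)
    + q ^ 2 • (f₂ + f₃ * M₁) + q ^ 3 • f₃ + (N + q ^ 2 • 1) * T * (M₂ + q • M₁ + q ^ 2 • 1)

theorem dressing_eq_dressedRegularPart {N f₀ f₁ f₂ f₃ M₁ M₂ : A} (hN : N * N = 0)
    (hc₂ : N * f₂ * M₂ + N * f₁ * M₁ + N * f₀ + f₀ * M₂ = 0)
    (hc₃ : N * f₃ * M₂ + N * f₂ * M₁ + N * f₁ + f₁ * M₂ + f₀ * M₁ = 0) (T : A) {q : 𝕜}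
    (hq : q ≠ 0) :
    (1 + (q ^ 2)⁻¹ • N) * (f₀ + q • f₁ + q ^ 2 • f₂ + q ^ 3 • f₃ + q ^ 4 • T)
        * (1 + q⁻¹ • M₁ + (q ^ 2)⁻¹ • M₂)
      = dressedRegularPart N f₀ f₁ f₂ f₃ M₁ M₂ T q := by
  have hNN : ∀ x : A, N * (N * x) = 0 := fun x => by rw [← mul_assoc, hN, zero_mul]
  have h₀₂ := eq_neg_of_add_eq_zero_right hc₂
  have h₀₁ := eq_neg_of_add_eq_zero_right hc₃
  simp only [dressedRegularPart, mul_add, add_mul, smul_mul_assoc, mul_smul_comm, smul_add,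
    smul_smul, mul_one, one_mul, mul_assoc, h₀₂, h₀₁, neg_add, mul_neg, smul_neg, hNN, smul_zero]
  match_scalars <;> field_simp <;> ring
end

section
variable {A : Type*} [Ring A] {N f₀ f₁ f₂ f₃ M₁ M₂ X : A}

theorem dressing_coeff_two_eq_zero (hM₂ : (N * f₂ + f₀) * M₂ = -(N * f₁ * M₁ + N * f₀)) :
    N * f₂ * M₂ + N * f₁ * M₁ + N * f₀ + f₀ * M₂ = 0 := by
  calc N * f₂ * M₂ + N * f₁ * M₁ + N * f₀ + f₀ * M₂
      = (N * f₂ + f₀) * M₂ + (N * f₁ * M₁ + N * f₀) := by noncomm_ring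
    _ = 0 := by rw [hM₂, neg_add_cancel]

theorem dressing_coeff_three_eq_zero (hX : X * (N * f₂ + f₀) = N * f₃ + f₁)
    (hM₁ : (N * f₂ + f₀ - X * N * f₁) * M₁ = X * N * f₀ - N * f₁)
    (hM₂ : (N * f₂ + f₀) * M₂ = -(N * f₁ * M₁ + N * f₀)) :
    N * f₃ * M₂ + N * f₂ * M₁ + N * f₁ + f₁ * M₂ + f₀ * M₁ = 0 := by
  calc N * f₃ * M₂ + N * f₂ * M₁ + N * f₁ + f₁ * M₂ + f₀ * M₁
      = X * ((N * f₂ + f₀) * M₂) + (N * f₂ + f₀ - X * N * f₁) * M₁ + X * N * f₁ * M₁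
          + N * f₁ := by
        rw [← mul_assoc, hX]; noncomm_ring
    _ = 0 := by rw [hM₂, hM₁]; noncomm_ring
end

namespace Matrix
variable {m : Type*} [Fintype m]

theorem exists_taylorCoeff_add_pow_smul {n : ℕ} {f : ℂ → Matrix (Fin n) (Fin n) ℂ}
    (hf : ∀ i j, Differentiable ℂ fun l => f l i j) (α : ℂ) (d : ℕ) :
    ∃ R : ℂ → Matrix (Fin n) (Fin n) ℂ, (∀ i j, Differentiable ℂ fun l => R l i j) ∧
      ∀ l, f l = ∑ k ∈ range d, (l - α) ^ k • taylorCoeff f α k + (l - α) ^ d • R l := by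
  refine ⟨fun l => of fun i j => (Function.swap dslope α)^[d] (fun t => f t i j) l,
    fun i j => (hf i j).iterate_dslope α d, fun l => ?_⟩
  ext i j
  refine (eq_sum_add_pow_smul_iterate_dslope (fun t => f t i j) α l d).trans ?_
  simp only [add_apply, sum_apply, smul_apply, taylorCoeff, of_apply, smul_eq_mul,
    (hf i j).iterate_dslope_apply_self, div_eq_inv_mul]

theorem differentiable_dressedRegularPart_apply [DecidableEq m] {R : ℂ → Matrix m m ℂ}
    (hR : ∀ i j, Differentiable ℂ fun l => R l i j) (N f₀ f₁ f₂ f₃ M₁ M₂ : Matrix m m ℂ) (α : ℂ)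
    (i j : m) :
    Differentiable ℂ fun l => dressedRegularPart N f₀ f₁ f₂ f₃ M₁ M₂ (R l) (l - α) i j := by
  simp only [dressedRegularPart, add_apply, smul_apply, mul_apply, one_apply, smul_eq_mul]
  fun_prop

end Matrix

theorem nilpotent_dressing_order_two_general (n : ℕ)
    (f : ℂ → Matrix (Fin n) (Fin n) ℂ)
    (hf : ∀ i j, Differentiable ℂ fun l => f l i j)
    (α : ℂ) (N : Matrix (Fin n) (Fin n) ℂ) (hN : N * N = 0)
    (f₀ f₁ f₂ f₃ : Matrix (Fin n) (Fin n) ℂ)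
    (hf₀ : f₀ = taylorCoeff f α 0) (hf₁ : f₁ = taylorCoeff f α 1)
    (hf₂ : f₂ = taylorCoeff f α 2) (hf₃ : f₃ = taylorCoeff f α 3)
    (hinv0 : IsUnit (N * f₂ + f₀))
    (X : Matrix (Fin n) (Fin n) ℂ) (hX : X = (N * f₃ + f₁) * (N * f₂ + f₀)⁻¹)
    (hinv1 : IsUnit (N * f₂ + f₀ - X * N * f₁))
    (M₁ M₂ : Matrix (Fin n) (Fin n) ℂ)
    (hM₁ : M₁ = (N * f₂ + f₀ - X * N * f₁)⁻¹ * (X * N * f₀ - N * f₁))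
    (hM₂ : M₂ = -(N * f₂ + f₀)⁻¹ * (N * f₁ * M₁ + N * f₀)) :
    ∃ h : ℂ → Matrix (Fin n) (Fin n) ℂ,
      (∀ i j, Differentiable ℂ fun l => h l i j) ∧
      ∀ l : ℂ, l ≠ α →
        h l = (1 + (((l - α) ^ 2)⁻¹) • N) * f l *
          (1 + (l - α)⁻¹ • M₁ + (((l - α) ^ 2)⁻¹) • M₂) := by
  obtain ⟨R, hR, hfR⟩ := Matrix.exists_taylorCoeff_add_pow_smul hf α 4
  have hdet₀ := (Matrix.isUnit_iff_isUnit_det _).1 hinv0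
  have hXeq : X * (N * f₂ + f₀) = N * f₃ + f₁ := by
    rw [hX, Matrix.nonsing_inv_mul_cancel_right _ _ hdet₀]
  have hM₁eq : (N * f₂ + f₀ - X * N * f₁) * M₁ = X * N * f₀ - N * f₁ := by
    rw [hM₁, Matrix.mul_nonsing_inv_cancel_left _ _ ((Matrix.isUnit_iff_isUnit_det _).1 hinv1)]
  have hM₂eq : (N * f₂ + f₀) * M₂ = -(N * f₁ * M₁ + N * f₀) := by
    rw [hM₂, neg_mul, mul_neg, Matrix.mul_nonsing_inv_cancel_left _ _ hdet₀]
  refine ⟨fun l => dressedRegularPart N f₀ f₁ f₂ f₃ M₁ M₂ (R l) (l - α),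
    Matrix.differentiable_dressedRegularPart_apply hR N f₀ f₁ f₂ f₃ M₁ M₂ α, fun l hl => ?_⟩
  simp only [hfR l, sum_range_succ, sum_range_zero, zero_add, pow_zero, one_smul, pow_one, ← hf₀,
    ← hf₁, ← hf₂, ← hf₃]
  exact (dressing_eq_dressedRegularPart hN (dressing_coeff_two_eq_zero hM₂eq)
    (dressing_coeff_three_eq_zero hXeq hM₁eq hM₂eq) (R l) (sub_ne_zero.2 hl)).symm

/-- **Nilpotent dressing with a pole of order two (Proposition 6.1).**
Let `f : ℂ → M_n(ℂ)` be holomorphic (entrywise) with invertible values, `α ∈ ℂ`, and `N`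
with `N² = 0`.  With `f_i` the Taylor coefficients of `f` at `α`, assume `N f₂ + f₀`
is invertible, set `X = (N f₃ + f₁)(N f₂ + f₀)⁻¹`, assume `N f₂ + f₀ - X N f₁` is
invertible, and define `M₁ = (N f₂ + f₀ - X N f₁)⁻¹ (X N f₀ - N f₁)` and
`M₂ = -(N f₂ + f₀)⁻¹ (N f₁ M₁ + N f₀)`.  Then
`λ ↦ (Id + (λ-α)⁻² N) f(λ) (Id + (λ-α)⁻¹ M₁ + (λ-α)⁻² M₂)` extends holomorphically
across `α`. -/
theorem nilpotent_dressing_order_two (n : ℕ)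
    (f : ℂ → Matrix (Fin n) (Fin n) ℂ)
    (hf : ∀ i j, Differentiable ℂ fun l => f l i j)
    (hfinv : ∀ l : ℂ, IsUnit (f l))
    (α : ℂ) (N : Matrix (Fin n) (Fin n) ℂ) (hN : N * N = 0)
    (f₀ f₁ f₂ f₃ : Matrix (Fin n) (Fin n) ℂ)
    (hf₀ : f₀ = taylorCoeff f α 0) (hf₁ : f₁ = taylorCoeff f α 1)
    (hf₂ : f₂ = taylorCoeff f α 2) (hf₃ : f₃ = taylorCoeff f α 3)
    (hinv0 : IsUnit (N * f₂ + f₀))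
    (X : Matrix (Fin n) (Fin n) ℂ) (hX : X = (N * f₃ + f₁) * (N * f₂ + f₀)⁻¹)
    (hinv1 : IsUnit (N * f₂ + f₀ - X * N * f₁))
    (M₁ M₂ : Matrix (Fin n) (Fin n) ℂ)
    (hM₁ : M₁ = (N * f₂ + f₀ - X * N * f₁)⁻¹ * (X * N * f₀ - N * f₁))
    (hM₂ : M₂ = -(N * f₂ + f₀)⁻¹ * (N * f₁ * M₁ + N * f₀)) :
    ∃ h : ℂ → Matrix (Fin n) (Fin n) ℂ,
      (∀ i j, Differentiable ℂ fun l => h l i j) ∧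
      ∀ l : ℂ, l ≠ α →
        h l = (1 + (((l - α) ^ 2)⁻¹) • N) * f l *
          (1 + (l - α)⁻¹ • M₁ + (((l - α) ^ 2)⁻¹) • M₂) :=
  nilpotent_dressing_order_two_general n f hf α N hN f₀ f₁ f₂ f₃ hf₀ hf₁ hf₂ hf₃ hinv0 X hX hinv1 M₁
    M₂ hM₁ hM₂
end

section
/- Let α ∈ ℂ, r ≥ 1, and A_1, …, A_r be n×n complex matrices, and set g(λ) = Id + ∑_{i=1}^r (λ−α)^{−i}A_i. If g(λ) is invertible for every λ ∈ ℂ ∖ {α}, then det g(λ) = 1 for every λ ∈ ℂ ∖ {α}. -/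
set_option synthInstance.maxHeartbeats 1000000
set_option maxHeartbeats 1000000

/-- **A loop with a single singularity and invertible values has determinant `1`.**
If `g(λ) = Id + ∑_{i=1}^r (λ-α)^{-i} A_i` is invertible for every `λ ≠ α`, then
`det g(λ) = 1` for every `λ ≠ α`. -/
theorem det_eq_one_of_single_singularity (n : ℕ) (α : ℂ) (r : ℕ) (hr : 1 ≤ r)
    (A : ℕ → Matrix (Fin n) (Fin n) ℂ)
    (g : ℂ → Matrix (Fin n) (Fin n) ℂ)
    (hg : ∀ l : ℂ, g l = 1 + ∑ i ∈ Finset.Icc 1 r, ((l - α) ^ i)⁻¹ • A i)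
    (hinv : ∀ l : ℂ, l ≠ α → IsUnit (g l)) :
    ∀ l : ℂ, l ≠ α → (g l).det = 1 := by
  -- The matrix over polynomials whose evaluation at μ gives g(α + μ⁻¹)
  set M : Matrix (Fin n) (Fin n) (Polynomial ℂ) :=
    1 + ∑ i ∈ Finset.Icc 1 r, (Polynomial.X : Polynomial ℂ) ^ i • (A i).map Polynomial.C with hM
  set P : Polynomial ℂ := M.det with hP
  have heval : ∀ μ : ℂ, P.eval μ = Matrix.det (1 + ∑ i ∈ Finset.Icc 1 r, (μ ^ i) • A i) := by
    intro μ
    have h := RingHom.map_det (Polynomial.evalRingHom μ) M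
    simp only [Polynomial.coe_evalRingHom] at h
    rw [hP, h]
    congr 1
    ext i j
    simp [hM, Matrix.map_apply, Matrix.add_apply, Matrix.sum_apply, Matrix.smul_apply,
      Matrix.one_apply, apply_ite, Polynomial.eval_finset_sum]
    exact Finset.sum_congr rfl fun x _ => by ring
  have hgv : ∀ μ : ℂ, μ ≠ 0 → P.eval μ = (g (α + μ⁻¹)).det := by
    intro μ hμ
    rw [heval, hg]
    congr 2
    apply Finset.sum_congr rfl
    intro i _
    congr 1
    rw [add_sub_cancel_left, ← inv_pow, inv_inv]
  have h0 : P.eval 0 = 1 := by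
    rw [heval]
    have : ∑ i ∈ Finset.Icc 1 r, ((0:ℂ) ^ i) • A i = 0 := by
      apply Finset.sum_eq_zero
      intro i hi
      rw [Finset.mem_Icc] at hi
      rw [zero_pow (by omega), zero_smul]
    rw [this, add_zero, Matrix.det_one]
  -- P has no roots, so it is constant
  have hnoroot : ∀ μ : ℂ, P.eval μ ≠ 0 := by
    intro μ
    rcases eq_or_ne μ 0 with h | h
    · rw [h, h0]; exact one_ne_zero
    · rw [hgv μ h]
      have hne : α + μ⁻¹ ≠ α := by
        intro hc
        apply h
        have : μ⁻¹ = 0 := by linear_combination hc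
        simpa using this
      exact ((Matrix.isUnit_iff_isUnit_det _).mp (hinv _ hne)).ne_zero
  have hPne : P ≠ 0 := fun h => hnoroot 0 (by rw [h, Polynomial.eval_zero])
  have hdeg : P.degree ≤ 0 := by
    by_contra hd
    push_neg at hd
    obtain ⟨z, hz⟩ := Complex.exists_root hd
    exact hnoroot z hz
  have hconst : P = Polynomial.C (P.coeff 0) := Polynomial.eq_C_of_degree_le_zero hdeg
  intro l hl
  have hμ : (l - α) ≠ 0 := sub_ne_zero_of_ne hl
  have : P.eval ((l - α)⁻¹) = (g l).det := by
    rw [hgv _ (inv_ne_zero hμ)]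
    congr 2
    rw [inv_inv]
    ring
  rw [← this, hconst, Polynomial.eval_C]
  have := h0
  rw [hconst, Polynomial.eval_C] at this
  exact this
end

section
/- Let α ∈ ℂ, r ≥ 1, and A_1, …, A_r be n×n complex matrices, and set g(λ) = Id + ∑_{i=1}^r (λ−α)^{−i}A_i. If g(λ) is invertible for every λ ∈ ℂ ∖ {α}, then g is a finite product of loops of the form m_{α,k,N}(λ) = Id + (λ−α)^{−k}N, where k ≥ 1 is an integer and N is an n×n complex matrix with N² = 0. -/
/-!
In the variable `μ = (λ - α)⁻¹`, `g` is the polynomial matrix `P(μ) = 1 + ∑ μ^i A_i`, with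
`P(0) = 1` and `P(μ)` invertible for every `μ`; hence `det P` has no roots and is a unit of
`ℂ[X]`. Since `ℂ[X]` is Euclidean, `P` is a product of transvections and invertible diagonal
matrices (Euclid's algorithm on the last column, then induction on the size). A transvection
`1 + c E_ij` splits along the monomials of `c` into a constant transvection and loops
`1 + μ^k (a E_ij)` with `(a E_ij)² = 0`, and invertible diagonal matrices are constant.
Conjugating a loop by a constant matrix gives again a loop, so all constants can be collected on
the left; evaluating at `μ = 0` shows that their product is `1`.
-/

open Polynomial

namespace Matrix

section Elementary

variable (ι R : Type*) [Fintype ι] [DecidableEq ι] [CommRing R]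

def transvections : Submonoid (Matrix ι ι R) :=
  Submonoid.closure (Set.range TransvectionStruct.toMatrix)

/-- Cohn's `GE_n(R)`. -/
def elementaryDiagonal : Submonoid (Matrix ι ι R) :=
  Submonoid.closure (Set.range TransvectionStruct.toMatrix ∪ diagonal '' {d | ∀ i, IsUnit (d i)})

variable {ι R}

theorem transvection_mem_transvections {i j : ι} (hij : i ≠ j) (c : R) :
    transvection i j c ∈ transvections ι R :=
  Submonoid.subset_closure ⟨⟨i, j, hij, c⟩, rfl⟩

theorem transvections_le_elementaryDiagonal : transvections ι R ≤ elementaryDiagonal ι R :=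
  Submonoid.closure_mono Set.subset_union_left

theorem diagonal_mem_elementaryDiagonal {d : ι → R} (hd : ∀ i, IsUnit (d i)) :
    diagonal d ∈ elementaryDiagonal ι R :=
  Submonoid.subset_closure (Or.inr ⟨d, hd, rfl⟩)

theorem exists_mul_eq_one_of_mem_transvections {T : Matrix ι ι R} (hT : T ∈ transvections ι R) :
    ∃ T' ∈ transvections ι R, T' * T = 1 := by
  induction hT using Submonoid.closure_induction with
  | mem _ h =>
    obtain ⟨t, rfl⟩ := h
    exact ⟨t.inv.toMatrix, Submonoid.subset_closure ⟨_, rfl⟩, t.inv_mul⟩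
  | one => exact ⟨1, one_mem _, mul_one 1⟩
  | mul T₁ T₂ _ _ h₁ h₂ =>
    obtain ⟨S₁, hS₁, e₁⟩ := h₁
    obtain ⟨S₂, hS₂, e₂⟩ := h₂
    exact ⟨S₂ * S₁, mul_mem hS₂ hS₁, by rw [mul_assoc, ← mul_assoc S₁, e₁, one_mul, e₂]⟩

theorem det_eq_one_of_mem_transvections {T : Matrix ι ι R} (hT : T ∈ transvections ι R) :
    T.det = 1 := by
  induction hT using Submonoid.closure_induction with
  | mem _ h => obtain ⟨t, rfl⟩ := h; exact t.det
  | one => exact det_one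
  | mul T₁ T₂ _ _ h₁ h₂ => rw [det_mul, h₁, h₂, one_mul]

theorem mem_elementaryDiagonal_of_mul_mem {T M : Matrix ι ι R} (hT : T ∈ transvections ι R)
    (h : T * M ∈ elementaryDiagonal ι R) : M ∈ elementaryDiagonal ι R := by
  obtain ⟨T', hT', hT'T⟩ := exists_mul_eq_one_of_mem_transvections hT
  simpa [← mul_assoc, hT'T] using mul_mem (transvections_le_elementaryDiagonal hT') h

theorem reindexAlgEquiv_mem_elementaryDiagonal {κ : Type*} [Fintype κ] [DecidableEq κ]
    (e : ι ≃ κ) {M : Matrix ι ι R} (hM : M ∈ elementaryDiagonal ι R) :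
    reindexAlgEquiv R R e M ∈ elementaryDiagonal κ R := by
  induction hM using Submonoid.closure_induction with
  | mem _ h =>
    rcases h with ⟨t, rfl⟩ | ⟨d, hd, rfl⟩
    · rw [← TransvectionStruct.toMatrix_reindexEquiv]
      exact Submonoid.subset_closure (Or.inl ⟨_, rfl⟩)
    · rw [coe_reindexAlgEquiv, reindex_apply, submatrix_diagonal_equiv]
      exact diagonal_mem_elementaryDiagonal fun i => hd _
  | one => rw [map_one]; exact one_mem _
  | mul _ _ _ _ h₁ h₂ => rw [map_mul]; exact mul_mem h₁ h₂

theorem reindexAlgEquiv_mem_elementaryDiagonal_iff {κ : Type*} [Fintype κ] [DecidableEq κ]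
    (e : ι ≃ κ) {M : Matrix ι ι R} :
    reindexAlgEquiv R R e M ∈ elementaryDiagonal κ R ↔ M ∈ elementaryDiagonal ι R := by
  refine ⟨fun h => ?_, reindexAlgEquiv_mem_elementaryDiagonal e⟩
  simpa using reindexAlgEquiv_mem_elementaryDiagonal e.symm h

theorem transvection_mul_transvection_mul_transvection_mul_apply {i j : ι} (hij : i ≠ j)
    {m : Type*} (M : Matrix ι m R) (k : m) :
    (transvection j i (1 : R) * (transvection i j (-1 : R) * (transvection j i (1 : R) * M))) j k =
      M i k := by
  rw [transvection_mul_apply_same, transvection_mul_apply_same,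
    transvection_mul_apply_of_ne _ _ _ _ hij.symm, transvection_mul_apply_of_ne _ _ _ _ hij,
    transvection_mul_apply_same]
  ring

variable {m n : Type*} [Fintype m] [DecidableEq m] [Fintype n] [DecidableEq n]

theorem fromBlocks_one_mem_transvections (C : Matrix m n R) :
    fromBlocks 1 C 0 1 ∈ transvections (m ⊕ n) R := by
  induction C using Matrix.induction_on' with
  | h_zero => rw [fromBlocks_one]; exact one_mem _
  | h_add C D hC hD =>
    convert mul_mem hC hD using 1
    simp [fromBlocks_multiply, add_comm]
  | h_std_basis i j c =>
    convert transvection_mem_transvections (Sum.inl_ne_inr : (Sum.inl i : m ⊕ n) ≠ Sum.inr j) c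
      using 1
    ext (a | a) (b | b) <;> simp [transvection, one_apply, single]

theorem fromBlocks_one_zero_mem_transvections (C : Matrix n m R) :
    fromBlocks 1 0 C 1 ∈ transvections (m ⊕ n) R := by
  induction C using Matrix.induction_on' with
  | h_zero => rw [fromBlocks_one]; exact one_mem _
  | h_add C D hC hD =>
    convert mul_mem hC hD using 1
    simp [fromBlocks_multiply]
  | h_std_basis i j c =>
    convert transvection_mem_transvections (Sum.inr_ne_inl : (Sum.inr i : m ⊕ n) ≠ Sum.inl j) c
      using 1
    ext (a | a) (b | b) <;> simp [transvection, one_apply, single]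

theorem fromBlocks_zero_zero_one_mem_elementaryDiagonal {A : Matrix m m R}
    (hA : A ∈ elementaryDiagonal m R) :
    fromBlocks A 0 0 (1 : Matrix n n R) ∈ elementaryDiagonal (m ⊕ n) R := by
  induction hA using Submonoid.closure_induction with
  | mem _ h =>
    rcases h with ⟨t, rfl⟩ | ⟨d, hd, rfl⟩
    · rw [← TransvectionStruct.toMatrix_sumInl]
      exact Submonoid.subset_closure (Or.inl ⟨_, rfl⟩)
    · rw [← diagonal_one, fromBlocks_diagonal]
      exact diagonal_mem_elementaryDiagonal (by rintro (i | i); exacts [hd i, isUnit_one])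
  | one => rw [fromBlocks_one]; exact one_mem _
  | mul _ _ _ _ h₁ h₂ =>
    convert mul_mem h₁ h₂ using 1
    simp [fromBlocks_multiply]

end Elementary

section EuclideanDomain

variable {ι R : Type*} [Fintype ι] [DecidableEq ι] [EuclideanDomain R]

theorem exists_mem_transvections_toBlocks₁₂_mul_eq_zero (M : Matrix (ι ⊕ Unit) (ι ⊕ Unit) R) :
    ∃ T ∈ transvections (ι ⊕ Unit) R, (T * M).toBlocks₁₂ = 0 := by
  set p : ι ⊕ Unit := Sum.inr ()
  by_cases hV : ∃ T ∈ transvections (ι ⊕ Unit) R, (T * M) p p ≠ 0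
  · obtain ⟨a, ⟨T, hT, rfl, ha⟩, hmin⟩ := EuclideanDomain.r_wellFounded.has_min
      {a | ∃ T ∈ transvections (ι ⊕ Unit) R, (T * M) p p = a ∧ a ≠ 0}
      (by obtain ⟨T, hT, h⟩ := hV; exact ⟨_, T, hT, rfl, h⟩)
    generalize hN : T * M = N at hmin ha ⊢
    -- otherwise the remainder of `N i p` modulo `N p p` can be moved to the pivot, contradicting
    -- the minimality of `N p p`
    have hdvd : ∀ i, N p p ∣ N (Sum.inl i) p := by
      intro i
      by_contra hndvd
      have hip : Sum.inl i ≠ p := Sum.inl_ne_inr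
      refine hmin _ ⟨transvection p (Sum.inl i) (1 : R) * (transvection (Sum.inl i) p (-1) *
          (transvection p (Sum.inl i) 1 *
            (transvection (Sum.inl i) p (-(N (Sum.inl i) p / N p p)) * T))),
          ?_, ?_, mt EuclideanDomain.mod_eq_zero.1 hndvd⟩ (EuclideanDomain.mod_lt _ ha)
      · exact mul_mem (transvection_mem_transvections hip.symm _) <| mul_mem
          (transvection_mem_transvections hip _) <| mul_mem
          (transvection_mem_transvections hip.symm _) <| mul_mem
          (transvection_mem_transvections hip _) hT
      · simp only [Matrix.mul_assoc]
        rw [transvection_mul_transvection_mul_transvection_mul_apply (R := R) hip,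
          transvection_mul_apply_same, EuclideanDomain.mod_eq_sub_mul_div, hN]
        ring
    refine ⟨fromBlocks 1 (of fun i _ => -(N (Sum.inl i) p / N p p)) 0 1 * T,
      mul_mem (fromBlocks_one_mem_transvections _) hT, ?_⟩
    ext i ⟨⟩
    rw [Matrix.mul_assoc, hN]
    simp [p, toBlocks₁₂, mul_apply, Fintype.sum_sum_type, one_apply]
    linear_combination -EuclideanDomain.mul_div_cancel' ha (hdvd i)
  · -- the last column vanishes: adding row `i` to row `p` would make the pivot nonzero
    push Not at hV
    refine ⟨1, one_mem _, ?_⟩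
    ext i ⟨⟩
    have h := hV _ (transvection_mem_transvections (Sum.inr_ne_inl : p ≠ Sum.inl i) 1)
    rw [transvection_mul_apply_same, ← Matrix.one_mul M, hV 1 (one_mem _)] at h
    simpa [toBlocks₁₂] using h

theorem mem_elementaryDiagonal_sum_unit
    (ih : ∀ A : Matrix ι ι R, IsUnit A.det → A ∈ elementaryDiagonal ι R)
    (M : Matrix (ι ⊕ Unit) (ι ⊕ Unit) R) (hM : IsUnit M.det) :
    M ∈ elementaryDiagonal (ι ⊕ Unit) R := by
  obtain ⟨T, hT, hN⟩ := exists_mem_transvections_toBlocks₁₂_mul_eq_zero M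
  refine mem_elementaryDiagonal_of_mul_mem hT ?_
  have hdet : IsUnit (T * M).det := by rwa [det_mul, det_eq_one_of_mem_transvections hT, one_mul]
  rw [← fromBlocks_toBlocks (T * M), hN] at hdet ⊢
  generalize (T * M).toBlocks₁₁ = A, (T * M).toBlocks₂₁ = C, (T * M).toBlocks₂₂ = D at hdet ⊢
  rw [det_fromBlocks_zero₁₂, IsUnit.mul_iff] at hdet
  have hD : fromBlocks (1 : Matrix ι ι R) 0 0 D = diagonal (Sum.elim 1 fun _ => D () ()) := by
    ext (i | ⟨⟩) (j | ⟨⟩) <;> simp [one_apply, diagonal_apply]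
  have hfactor : fromBlocks A 0 C D =
      fromBlocks A 0 0 1 * fromBlocks 1 0 0 D * fromBlocks 1 0 (D⁻¹ * C) 1 := by
    simp only [fromBlocks_multiply, Matrix.mul_one, Matrix.one_mul, Matrix.mul_zero,
      Matrix.zero_mul, add_zero, zero_add, mul_nonsing_inv_cancel_left _ _ hdet.2]
  rw [hfactor, hD]
  refine mul_mem (mul_mem (fromBlocks_zero_zero_one_mem_elementaryDiagonal (ih A hdet.1))
    (diagonal_mem_elementaryDiagonal ?_))
    (transvections_le_elementaryDiagonal (fromBlocks_one_zero_mem_transvections _))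
  rintro (i | i)
  · exact isUnit_one
  · simpa [det_unique] using hdet.2

theorem mem_elementaryDiagonal_of_fin (r : ℕ) (M : Matrix (Fin r) (Fin r) R)
    (hM : IsUnit M.det) : M ∈ elementaryDiagonal (Fin r) R := by
  induction r with
  | zero => rw [Subsingleton.elim M 1]; exact one_mem _
  | succ r ih =>
    let e : Fin (r + 1) ≃ Fin r ⊕ Unit := Fintype.equivOfCardEq (by simp)
    rw [← reindexAlgEquiv_mem_elementaryDiagonal_iff e]
    refine mem_elementaryDiagonal_sum_unit (fun A hA => ih A hA) _ ?_
    rwa [coe_reindexAlgEquiv, det_reindex_self]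

theorem mem_elementaryDiagonal (M : Matrix ι ι R) (hM : IsUnit M.det) :
    M ∈ elementaryDiagonal ι R := by
  rw [← reindexAlgEquiv_mem_elementaryDiagonal_iff (Fintype.equivFin ι)]
  refine mem_elementaryDiagonal_of_fin _ _ ?_
  rwa [coe_reindexAlgEquiv, det_reindex_self]

end EuclideanDomain

section Polynomial

variable (ι K : Type*) [Fintype ι] [DecidableEq ι]

/-- In the variable `μ = (λ - α)⁻¹`, the loop `m_{α,k,N}` is `1 + μ ^ k • N`. -/
noncomputable def squareZeroLoops [CommRing K] : Submonoid (Matrix ι ι K[X]) :=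
  Submonoid.closure
    {P | ∃ (k : ℕ) (N : Matrix ι ι K), 1 ≤ k ∧ N * N = 0 ∧ 1 + (X ^ k : K[X]) • N.map C = P}

variable {ι K}

theorem conj_mem_squareZeroLoops [CommRing K] (U : (Matrix ι ι K)ˣ) {P : Matrix ι ι K[X]}
    (hP : P ∈ squareZeroLoops ι K) :
    (↑U⁻¹ : Matrix ι ι K).map C * P * (↑U : Matrix ι ι K).map C ∈ squareZeroLoops ι K := by
  obtain ⟨u, v, huv, hvu⟩ := U
  simp only [Units.inv_mk]
  have hvu' : v.map C * u.map C = 1 := by simp [← Matrix.map_mul, hvu]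
  have huv' : u.map C * v.map C = 1 := by simp [← Matrix.map_mul, huv]
  induction hP using Submonoid.closure_induction with
  | mem _ h =>
    obtain ⟨k, N, hk, hN, rfl⟩ := h
    refine Submonoid.subset_closure ⟨k, v * N * u, hk, ?_, ?_⟩
    · simp [Matrix.mul_assoc, ← Matrix.mul_assoc u v, huv, ← Matrix.mul_assoc N N, hN]
    · simp [Matrix.mul_add, Matrix.add_mul, hvu', Matrix.map_mul]
  | one => rw [Matrix.mul_one, hvu']; exact one_mem _
  | mul P Q _ _ hP hQ =>
    convert mul_mem hP hQ using 1
    simp only [Matrix.mul_assoc, ← Matrix.mul_assoc (u.map C) (v.map C), huv', Matrix.one_mul]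

variable (ι K) in
noncomputable def unitsMulSquareZeroLoops [CommRing K] : Submonoid (Matrix ι ι K[X]) where
  carrier :=
    {P | ∃ U : (Matrix ι ι K)ˣ, ∃ Q ∈ squareZeroLoops ι K, (↑U : Matrix ι ι K).map C * Q = P}
  one_mem' := ⟨1, 1, one_mem _, by simp⟩
  mul_mem' := by
    rintro _ _ ⟨U, Q, hQ, rfl⟩ ⟨V, Q', hQ', rfl⟩
    refine ⟨U * V, _, mul_mem (conj_mem_squareZeroLoops V hQ) hQ', ?_⟩
    have hVV : (↑V : Matrix ι ι K).map C * (↑V⁻¹ : Matrix ι ι K).map C = 1 := by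
      simp [← Matrix.map_mul]
    simp only [Units.val_mul, Matrix.map_mul, Matrix.mul_assoc]
    rw [← Matrix.mul_assoc ((↑V : Matrix ι ι K).map C), hVV, Matrix.one_mul]

theorem transvection_mem_unitsMulSquareZeroLoops [CommRing K] {i j : ι} (hij : i ≠ j)
    (c : K[X]) :
    transvection i j c ∈ unitsMulSquareZeroLoops ι K := by
  induction c using Polynomial.induction_on' with
  | add p q hp hq => rw [← transvection_mul_transvection_same _ _ hij]; exact mul_mem hp hq
  | monomial k a =>
    rcases k.eq_zero_or_pos with rfl | hk
    · have hU : IsUnit (transvection i j a) := by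
        rw [isUnit_iff_isUnit_det, det_transvection_of_ne _ _ hij]; exact isUnit_one
      refine ⟨hU.unit, 1, one_mem _, ?_⟩
      simp [transvection, Matrix.map_add]
    · refine ⟨1, _, Submonoid.subset_closure
        ⟨k, single i j a, hk, single_mul_single_of_ne a i j i hij.symm a, rfl⟩, ?_⟩
      simp only [Units.val_one, Matrix.map_one _ C.map_zero C.map_one, Matrix.one_mul, transvection,
        map_single, smul_single, ← C_mul_X_pow_eq_monomial, smul_eq_mul, mul_comm]

theorem diagonal_mem_unitsMulSquareZeroLoops [CommRing K] [NoZeroDivisors K] {d : ι → K[X]}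
    (hd : ∀ i, IsUnit (d i)) :
    diagonal d ∈ unitsMulSquareZeroLoops ι K := by
  choose c hc hcd using fun i => Polynomial.isUnit_iff.1 (hd i)
  have hU : IsUnit (diagonal c) := isUnit_diagonal.2 (Pi.isUnit_iff.2 hc)
  refine ⟨hU.unit, 1, one_mem _, ?_⟩
  simp [diagonal_map, hcd]

theorem elementaryDiagonal_le_unitsMulSquareZeroLoops [CommRing K] [NoZeroDivisors K] :
    elementaryDiagonal ι K[X] ≤ unitsMulSquareZeroLoops ι K := by
  refine Submonoid.closure_le.2 ?_
  rintro _ (⟨t, rfl⟩ | ⟨d, hd, rfl⟩)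
  · exact transvection_mem_unitsMulSquareZeroLoops t.hij t.c
  · exact diagonal_mem_unitsMulSquareZeroLoops hd

theorem map_eval_zero_of_mem_squareZeroLoops [CommRing K] {P : Matrix ι ι K[X]}
    (hP : P ∈ squareZeroLoops ι K) : P.map (eval 0) = 1 := by
  suffices squareZeroLoops ι K ≤ MonoidHom.mker (evalRingHom (0 : K)).mapMatrix from
    this hP
  refine Submonoid.closure_le.2 ?_
  rintro _ ⟨k, N, hk, -, rfl⟩
  ext a b
  simp [one_apply, apply_ite (eval (0 : K)), zero_pow (Nat.one_le_iff_ne_zero.1 hk)]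

theorem mem_squareZeroLoops_of_isUnit_det [Field K] {P : Matrix ι ι K[X]} (hdet : IsUnit P.det)
    (h0 : P.map (eval 0) = 1) : P ∈ squareZeroLoops ι K := by
  obtain ⟨U, Q, hQ, rfl⟩ :=
    elementaryDiagonal_le_unitsMulSquareZeroLoops (mem_elementaryDiagonal P hdet)
  have hU : (↑U : Matrix ι ι K) = 1 := by
    rw [← coe_evalRingHom, Matrix.map_mul, coe_evalRingHom,
      map_eval_zero_of_mem_squareZeroLoops hQ, Matrix.mul_one] at h0
    simpa [Function.comp_def] using h0
  simpa [hU] using hQ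

theorem exists_list_of_mem_squareZeroLoops [CommRing K] {P : Matrix ι ι K[X]}
    (hP : P ∈ squareZeroLoops ι K) :
    ∃ L : List (ℕ × Matrix ι ι K), (∀ kN ∈ L, 1 ≤ kN.1 ∧ kN.2 * kN.2 = 0) ∧
      ∀ x : K, P.map (eval x) = (L.map fun kN => 1 + x ^ kN.1 • kN.2).prod := by
  induction hP using Submonoid.closure_induction with
  | mem _ h =>
    obtain ⟨k, N, hk, hN, rfl⟩ := h
    refine ⟨[(k, N)], by simp [hk, hN], fun x => ?_⟩
    ext a b
    simp [one_apply, apply_ite (eval x)]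
    ring
  | one => exact ⟨[], by simp, fun x => by simp [Matrix.map_one]⟩
  | mul P Q _ _ hP hQ =>
    obtain ⟨L₁, hL₁, e₁⟩ := hP
    obtain ⟨L₂, hL₂, e₂⟩ := hQ
    refine ⟨L₁ ++ L₂, fun kN hkN => (List.mem_append.1 hkN).elim (hL₁ kN) (hL₂ kN), fun x => ?_⟩
    rw [← coe_evalRingHom, Matrix.map_mul, coe_evalRingHom, e₁, e₂, List.map_append,
      List.prod_append]

theorem isUnit_det_of_forall_isUnit_map_eval [Field K] [IsAlgClosed K] {P : Matrix ι ι K[X]}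
    (h : ∀ x, IsUnit (P.map (eval x))) : IsUnit P.det := by
  rw [Polynomial.isUnit_iff_degree_eq_zero]
  by_contra hdeg
  obtain ⟨z, hz⟩ := IsAlgClosed.exists_root _ hdeg
  have hdet := (isUnit_iff_isUnit_det _).1 (h z)
  rw [← coe_evalRingHom, ← RingHom.mapMatrix_apply, ← RingHom.map_det, coe_evalRingHom,
    hz.eq_zero] at hdet
  exact not_isUnit_zero hdet

end Polynomial

end Matrix

theorem one_singularity_GLnC_general (n : ℕ) (α : ℂ) (r : ℕ)
    (A : ℕ → Matrix (Fin n) (Fin n) ℂ)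
    (g : ℂ → Matrix (Fin n) (Fin n) ℂ)
    (hg : ∀ l : ℂ, g l = 1 + ∑ i ∈ Finset.Icc 1 r, ((l - α) ^ i)⁻¹ • A i)
    (hinv : ∀ l : ℂ, l ≠ α → IsUnit (g l)) :
    ∃ L : List (ℕ × Matrix (Fin n) (Fin n) ℂ),
      (∀ kN ∈ L, 1 ≤ kN.1 ∧ kN.2 * kN.2 = 0) ∧
      ∀ l : ℂ, l ≠ α →
        g l = (L.map fun kN => 1 + ((l - α) ^ kN.1)⁻¹ • kN.2).prod := by
  set P : Matrix (Fin n) (Fin n) ℂ[X] := 1 + ∑ i ∈ Finset.Icc 1 r, (X ^ i : ℂ[X]) • (A i).map C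
  have hP : ∀ x, P.map (eval x) = 1 + ∑ i ∈ Finset.Icc 1 r, x ^ i • A i := by
    intro x
    ext a b
    simp [P, Matrix.one_apply, apply_ite (eval x), Matrix.sum_apply, eval_finsetSum]
    exact Finset.sum_congr rfl fun _ _ => mul_comm _ _
  have hgP : ∀ l, g l = P.map (eval (l - α)⁻¹) := by simp [hg, hP, inv_pow]
  have hP0 : P.map (eval 0) = 1 := by
    rw [hP]
    simp +contextual [Finset.sum_eq_zero, Nat.one_le_iff_ne_zero.1]
  have hunit : ∀ x, IsUnit (P.map (eval x)) := by
    intro x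
    rcases eq_or_ne x 0 with rfl | hx
    · rw [hP0]; exact isUnit_one
    · simpa [hgP] using hinv (α + x⁻¹) (by simpa using hx)
  obtain ⟨L, hL, hLP⟩ := Matrix.exists_list_of_mem_squareZeroLoops <|
    Matrix.mem_squareZeroLoops_of_isUnit_det (Matrix.isUnit_det_of_forall_isUnit_map_eval hunit) hP0
  exact ⟨L, hL, fun l _ => by simp [hgP, hLP, inv_pow]⟩

/-- **One-singularity loops are products of the `m_{α,k,N}` (second part of the proof of
Theorem 3.2).**  If `g(λ) = Id + ∑_{i=1}^r (λ-α)^{-i} A_i` is invertible for every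
`λ ≠ α`, then `g` is a finite product of loops `m_{α,k,N}(λ) = Id + (λ-α)^{-k} N` with
`k ≥ 1` an integer and `N² = 0`. -/
theorem one_singularity_GLnC (n : ℕ) (α : ℂ) (r : ℕ) (hr : 1 ≤ r)
    (A : ℕ → Matrix (Fin n) (Fin n) ℂ)
    (g : ℂ → Matrix (Fin n) (Fin n) ℂ)
    (hg : ∀ l : ℂ, g l = 1 + ∑ i ∈ Finset.Icc 1 r, ((l - α) ^ i)⁻¹ • A i)
    (hinv : ∀ l : ℂ, l ≠ α → IsUnit (g l)) :
    ∃ L : List (ℕ × Matrix (Fin n) (Fin n) ℂ),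
      (∀ kN ∈ L, 1 ≤ kN.1 ∧ kN.2 * kN.2 = 0) ∧
      ∀ l : ℂ, l ≠ α →
        g l = (L.map fun kN => 1 + ((l - α) ^ kN.1)⁻¹ • kN.2).prod :=
  one_singularity_GLnC_general n α r A g hg hinv
end

section
/- Let V ⊆ ℂⁿ be an isotropic subspace and let M: ℂⁿ → ℂⁿ be a linear map with M(V ⊕ sV) = 0 and image of M contained in V. Then N = M − M* satisfies: N(V) = 0, N maps sV into (V ⊕ sV)^⊥, N maps (V ⊕ sV)^⊥ into V; in particular N² maps sV into V, and N³ = 0. -/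
set_option synthInstance.maxHeartbeats 1000000
set_option maxHeartbeats 1000000

open scoped Matrix ComplexConjugate

/-!
Everything follows from `⟨x, M* y⟩ = ⟨M x, y⟩` and nondegeneracy of the form: since `im M ⊆ V`,
`M*` kills every vector orthogonal to `V`, in particular `V` itself (isotropy) and
`(V ⊕ sV)^⊥`, while `M(V ⊕ sV) = 0` gives `⟨y, M* u⟩ = ⟨M y, u⟩ = 0` for `y, u ∈ V ⊕ sV`.
For nilpotency, `M² = 0`, `M* M = 0` and `M*² = (M²)* = 0`, so `N² = -M M*` and
`N³ = -M M* M + M M* M* = 0`.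
-/

section IndefiniteForm

variable {p q : ℕ}

lemma sMat_mul_sMat : sMat p q * sMat p q = 1 := by
  rw [sMat, Matrix.diagonal_mul_diagonal, ← Matrix.diagonal_one]
  congr 1
  funext i
  split_ifs <;> norm_num

lemma sMat_mulVec_sMat_mulVec (v : Fin (p + q) → ℂ) : sMat p q *ᵥ (sMat p q *ᵥ v) = v := by
  rw [Matrix.mulVec_mulVec, sMat_mul_sMat, Matrix.one_mulVec]

lemma herm_sub_right (y v w : Fin (p + q) → ℂ) :
    herm p q y (v - w) = herm p q y v - herm p q y w := by
  simp only [herm, Matrix.mulVec_sub, dotProduct_sub]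

lemma herm_adjUpq_mulVec (A : Matrix (Fin (p + q)) (Fin (p + q)) ℂ) (x y : Fin (p + q) → ℂ) :
    herm p q x (adjUpq p q A *ᵥ y) = herm p q (A *ᵥ x) y := by
  rw [herm, herm, adjUpq, Matrix.star_mulVec, ← Matrix.dotProduct_mulVec, Matrix.mulVec_mulVec,
    Matrix.mulVec_mulVec, ← Matrix.mul_assoc, ← Matrix.mul_assoc, sMat_mul_sMat, Matrix.one_mul]

open ComplexOrder in
lemma eq_zero_of_forall_herm_eq_zero {w : Fin (p + q) → ℂ} (h : ∀ x, herm p q x w = 0) :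
    w = 0 := by
  have hsw : sMat p q *ᵥ w = 0 := dotProduct_star_self_eq_zero.mp (h (sMat p q *ᵥ w))
  rw [← sMat_mulVec_sMat_mulVec w, hsw, Matrix.mulVec_zero]

lemma adjUpq_mulVec_eq_zero {A : Matrix (Fin (p + q)) (Fin (p + q)) ℂ} {w : Fin (p + q) → ℂ}
    (h : ∀ x, herm p q (A *ᵥ x) w = 0) : adjUpq p q A *ᵥ w = 0 :=
  eq_zero_of_forall_herm_eq_zero fun x => by rw [herm_adjUpq_mulVec, h]

lemma adjUpq_mul (A B : Matrix (Fin (p + q)) (Fin (p + q)) ℂ) :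
    adjUpq p q (A * B) = adjUpq p q B * adjUpq p q A := by
  simp only [adjUpq, Matrix.conjTranspose_mul, Matrix.mul_assoc]
  rw [← Matrix.mul_assoc (sMat p q) (sMat p q), sMat_mul_sMat, Matrix.one_mul]

lemma adjUpq_zero : adjUpq p q 0 = 0 := by
  simp [adjUpq]

end IndefiniteForm

lemma sub_pow_three_eq_zero {R : Type*} [Ring R] {a b : R}
    (haa : a * a = 0) (hba : b * a = 0) (hbb : b * b = 0) : (a - b) ^ 3 = 0 := by
  have hsq : (a - b) * (a - b) = -(a * b) := by
    rw [sub_mul, mul_sub, mul_sub, haa, hba, hbb]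
    abel
  rw [pow_succ, sq, hsq, neg_mul, mul_sub, mul_assoc, mul_assoc, hba, hbb]
  simp

/-- **Structure of the nilpotent maps `N = M - M*` (discussion before Lemma 4.4).**
Let `V` be isotropic and `M` a linear map with `M(V ⊕ sV) = 0` and `im M ⊆ V`.  Then
`N = M - M*` kills `V`, maps `sV` into `(V ⊕ sV)^⊥` and `(V ⊕ sV)^⊥` into `V`;
in particular `N²` maps `sV` into `V`, and `N³ = 0`. -/
theorem N_three_step_nilpotent (p q : ℕ)
    (V : Submodule ℂ (Fin (p + q) → ℂ)) (hV : IsIsotropic p q V)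
    (M : Matrix (Fin (p + q)) (Fin (p + q)) ℂ)
    (hMker : ∀ x ∈ V ⊔ V.map (sMat p q).mulVecLin, M.mulVec x = 0)
    (hMran : LinearMap.range M.mulVecLin ≤ V)
    (N : Matrix (Fin (p + q)) (Fin (p + q)) ℂ) (hN : N = M - adjUpq p q M) :
    (∀ v ∈ V, N.mulVec v = 0) ∧
    (∀ u ∈ V.map (sMat p q).mulVecLin,
      ∀ y ∈ V ⊔ V.map (sMat p q).mulVecLin, herm p q y (N.mulVec u) = 0) ∧
    (∀ w : Fin (p + q) → ℂ,
      (∀ y ∈ V ⊔ V.map (sMat p q).mulVecLin, herm p q y w = 0) → N.mulVec w ∈ V) ∧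
    (∀ u ∈ V.map (sMat p q).mulVecLin, (N * N).mulVec u ∈ V) ∧
    N ^ 3 = 0 := by
  subst hN
  set W := V ⊔ V.map (sMat p q).mulVecLin
  have hMV (x) : M *ᵥ x ∈ V := hMran ⟨x, rfl⟩
  have hM'V (v) (hv : v ∈ V) : adjUpq p q M *ᵥ v = 0 :=
    adjUpq_mulVec_eq_zero fun x => hV _ (hMV x) v hv
  have hNV (v) (hv : v ∈ V) : (M - adjUpq p q M) *ᵥ v = 0 := by
    rw [Matrix.sub_mulVec, hMker v (Submodule.mem_sup_left hv), hM'V v hv, sub_zero]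
  have hNsV (u) (hu : u ∈ V.map (sMat p q).mulVecLin) (y) (hy : y ∈ W) :
      herm p q y ((M - adjUpq p q M) *ᵥ u) = 0 := by
    rw [Matrix.sub_mulVec, herm_sub_right, herm_adjUpq_mulVec,
      hMker u (Submodule.mem_sup_right hu), hMker y hy]
    simp [herm]
  have hNperp (w) (hw : ∀ y ∈ W, herm p q y w = 0) : (M - adjUpq p q M) *ᵥ w ∈ V := by
    rw [Matrix.sub_mulVec, adjUpq_mulVec_eq_zero fun x => hw _ (Submodule.mem_sup_left (hMV x)),
      sub_zero]
    exact hMV w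
  refine ⟨hNV, hNsV, hNperp, fun u hu => ?_, ?_⟩
  · rw [← Matrix.mulVec_mulVec]
    exact hNperp _ (hNsV u hu)
  · have hMM : M * M = 0 := Matrix.ext_iff_mulVec.mpr fun x => by
      rw [← Matrix.mulVec_mulVec, hMker _ (Submodule.mem_sup_left (hMV x)), Matrix.zero_mulVec]
    have hM'M : adjUpq p q M * M = 0 := Matrix.ext_iff_mulVec.mpr fun x => by
      rw [← Matrix.mulVec_mulVec, hM'V _ (hMV x), Matrix.zero_mulVec]
    have hM'M' : adjUpq p q M * adjUpq p q M = 0 := by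
      rw [← adjUpq_mul, hMM, adjUpq_zero]
    exact sub_pow_three_eq_zero hMM hM'M hM'M'
end

section
/- Let r ≥ 1 and A_0 = Id, A_1, …, A_r be n×n complex matrices satisfying ∑_{i+j=k, 0≤i,j≤r} ⟨A_i v, A_j w⟩ = 0 for every k ≥ 1 and all v, w ∈ ℂⁿ. For 0 ≤ i ≤ r+1 define K_i = ∩_{r≥j≥i} ker A_j (with K_{r+1} = ℂⁿ) and V_i = ∑_{r≥j≥i} A_j(K_{j+1}). Then ⟨A_j u, A_{j'} u'⟩ = 0 whenever j, j' ≥ 0 with j + j' ≥ 1, u ∈ K_{j+1} and u' ∈ K_{j'+1}; consequently, V_i is isotropic for every i ≥ 1, and V_0 is perpendicular to V_1. -/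
set_option synthInstance.maxHeartbeats 1000000
set_option maxHeartbeats 1000000

open scoped Matrix ComplexConjugate

/-!
Take `u ∈ K_{j+1}` and `u' ∈ K_{j'+1}`, so that `A_m u = 0` for `j < m ≤ r` and `A_m u' = 0`
for `j' < m ≤ r`. In the reality condition for `k = j + j'`, every term
`⟨A_i u, A_{i'} u'⟩` with `i + i' = k` and `(i, i') ≠ (j, j')` has `i > j` or `i' > j'`, hence
vanishes; what is left is `⟨A_j u, A_{j'} u'⟩ = 0`. Since `V_i` is spanned by the spaces
`A_j(K_{j+1})`, `j ≥ i`, and the form is sesquilinear, this gives the orthogonality of `V_i`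
and `V_{i'}` as soon as `i + i' ≥ 1`.
-/

noncomputable def hermForm (p q : ℕ) :
    (Fin (p + q) → ℂ) →ₗ⋆[ℂ] (Fin (p + q) → ℂ) →ₗ[ℂ] ℂ :=
  LinearMap.mk₂'ₛₗ (starRingEnd ℂ) (RingHom.id ℂ) (herm p q)
    (fun _ _ _ => by simp only [herm, star_add, add_dotProduct])
    (fun _ _ _ => by simp only [herm, star_smul, smul_dotProduct, Complex.star_def])
    (fun _ _ _ => by simp only [herm, Matrix.mulVec_add, dotProduct_add])
    (fun _ _ _ => by simp only [herm, Matrix.mulVec_smul, dotProduct_smul]; rfl)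

@[simp]
theorem hermForm_apply (p q : ℕ) (v w : Fin (p + q) → ℂ) : hermForm p q v w = herm p q v w :=
  rfl

theorem LinearMap.eq_zero_of_mem_biSup {R R' M N P ι κ : Type*} [CommSemiring R]
    [CommSemiring R'] [AddCommMonoid M] [AddCommMonoid N] [AddCommMonoid P] [Module R M]
    [Module R' N] [Module R' P] {σ : R →+* R'}
    (B : M →ₛₗ[σ] N →ₗ[R'] P) {s : Finset ι} {t : Finset κ} {S : ι → Submodule R M}
    {T : κ → Submodule R' N} (h : ∀ i ∈ s, ∀ j ∈ t, ∀ x ∈ S i, ∀ y ∈ T j, B x y = 0)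
    {x : M} {y : N} (hx : x ∈ ⨆ i ∈ s, S i) (hy : y ∈ ⨆ j ∈ t, T j) : B x y = 0 := by
  have hS : ∀ j ∈ t, ∀ y ∈ T j, (⨆ i ∈ s, S i) ≤ LinearMap.ker (B.flip y) :=
    fun j hj y hy => iSup₂_le fun i hi x hx => h i hi j hj x hx y hy
  have hT : (⨆ j ∈ t, T j) ≤ LinearMap.ker (B x) :=
    iSup₂_le fun j hj y hy => hS j hj y hy hx
  exact hT hy

theorem Finset.sum_range_sum_range_ite_add_eq {M : Type*} [AddCommMonoid M] (f : ℕ → ℕ → M)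
    {r a b : ℕ} (ha : a ≤ r) (hb : b ≤ r)
    (hf : ∀ i ≤ r, ∀ j ≤ r, a < i ∨ b < j → f i j = 0) :
    (∑ i ∈ range (r + 1), ∑ j ∈ range (r + 1), if i + j = a + b then f i j else 0) = f a b := by
  calc (∑ i ∈ range (r + 1), ∑ j ∈ range (r + 1), if i + j = a + b then f i j else 0)
      = ∑ i ∈ range (r + 1), if i = a then ∑ j ∈ range (r + 1), if j = b then f a b else 0
          else 0 := by
        refine sum_congr rfl fun i hi => ?_
        split_ifs with hia
        · subst hia
          refine sum_congr rfl fun j _ => ?_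
          by_cases hjb : j = b
          · simp only [hjb, if_true]
          · simp only [add_right_inj, hjb, if_false]
        · refine sum_eq_zero fun j hj => ?_
          rw [mem_range] at hi hj
          split_ifs
          · exact hf i (by omega) j (by omega) (by omega)
          · rfl
    _ = f a b := by simp [Nat.lt_succ_of_le ha, Nat.lt_succ_of_le hb]

theorem herm_mulVec_eq_zero_of_reality {p q r : ℕ}
    {A : ℕ → Matrix (Fin (p + q)) (Fin (p + q)) ℂ}
    (hreal : ∀ k : ℕ, 1 ≤ k → ∀ v w : Fin (p + q) → ℂ,
      (∑ i ∈ Finset.range (r + 1), ∑ j ∈ Finset.range (r + 1),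
        if i + j = k then herm p q ((A i).mulVec v) ((A j).mulVec w) else 0) = 0)
    {a b : ℕ} (ha : a ≤ r) (hb : b ≤ r) (hab : 1 ≤ a + b) {u u' : Fin (p + q) → ℂ}
    (hu : ∀ m, a < m → m ≤ r → A m *ᵥ u = 0) (hu' : ∀ m, b < m → m ≤ r → A m *ᵥ u' = 0) :
    herm p q (A a *ᵥ u) (A b *ᵥ u') = 0 := by
  rw [← hreal (a + b) hab u u', Finset.sum_range_sum_range_ite_add_eq _ ha hb]
  rintro i hi j hj (hai | hbj)
  · rw [hu i hai hi, ← hermForm_apply, map_zero, LinearMap.zero_apply]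
  · rw [hu' j hbj hj, ← hermForm_apply, map_zero]

theorem filtration_isotropic_general (p q : ℕ) (r : ℕ)
    (A : ℕ → Matrix (Fin (p + q)) (Fin (p + q)) ℂ)
    (hreal : ∀ k : ℕ, 1 ≤ k → ∀ v w : Fin (p + q) → ℂ,
      (∑ i ∈ Finset.range (r + 1), ∑ j ∈ Finset.range (r + 1),
        if i + j = k then herm p q ((A i).mulVec v) ((A j).mulVec w) else 0) = 0)
    (K : ℕ → Submodule ℂ (Fin (p + q) → ℂ))
    (hK : ∀ i, K i = ⨅ j ∈ Finset.Icc i r, LinearMap.ker (A j).mulVecLin)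
    (V : ℕ → Submodule ℂ (Fin (p + q) → ℂ))
    (hV : ∀ i, V i = ⨆ j ∈ Finset.Icc i r, (K (j + 1)).map (A j).mulVecLin) :
    (∀ j j' : ℕ, j ≤ r → j' ≤ r → 1 ≤ j + j' →
      ∀ u ∈ K (j + 1), ∀ u' ∈ K (j' + 1),
        herm p q ((A j).mulVec u) ((A j').mulVec u') = 0) ∧
    (∀ i : ℕ, 1 ≤ i → ∀ x ∈ V i, ∀ y ∈ V i, herm p q x y = 0) ∧
    (∀ x ∈ V 0, ∀ y ∈ V 1, herm p q x y = 0) := by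
  have hKker : ∀ a, ∀ u ∈ K (a + 1), ∀ m, a < m → m ≤ r → A m *ᵥ u = 0 := by
    intro a u hu m ham hmr
    simp only [hK, Submodule.mem_iInf, LinearMap.mem_ker, Matrix.mulVecLin_apply,
      Finset.mem_Icc] at hu
    exact hu m ⟨ham, hmr⟩
  have key : ∀ j j' : ℕ, j ≤ r → j' ≤ r → 1 ≤ j + j' →
      ∀ u ∈ K (j + 1), ∀ u' ∈ K (j' + 1), herm p q (A j *ᵥ u) (A j' *ᵥ u') = 0 :=
    fun j j' hj hj' hjj' u hu u' hu' =>
      herm_mulVec_eq_zero_of_reality hreal hj hj' hjj' (hKker j u hu) (hKker j' u' hu')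
  have perp : ∀ i i', 1 ≤ i + i' → ∀ x ∈ V i, ∀ y ∈ V i', herm p q x y = 0 := by
    intro i i' hii' x hx y hy
    rw [hV] at hx hy
    refine (hermForm p q).eq_zero_of_mem_biSup ?_ hx hy
    rintro j hj j' hj' _ ⟨u, hu, rfl⟩ _ ⟨u', hu', rfl⟩
    rw [Finset.mem_Icc] at hj hj'
    exact key j j' hj.2 hj'.2 (by omega) u hu u' hu'
  exact ⟨key, fun i hi => perp i i (by omega), perp 0 1 le_rfl⟩

/-- **Isotropy of the filtration spaces `V_i` (proof of Theorem 4.5).**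
Let `A_0 = Id, A_1, …, A_r` satisfy the `U(p,q)`-reality condition
`∑_{i+j=k} ⟨A_i v, A_j w⟩ = 0` for all `k ≥ 1`.  With `K_i = ∩_{j≥i} ker A_j` and
`V_i = ∑_{j≥i} A_j(K_{j+1})` one has `⟨A_j u, A_{j'} u'⟩ = 0` whenever `j + j' ≥ 1`,
`u ∈ K_{j+1}`, `u' ∈ K_{j'+1}`; consequently `V_i` is isotropic for `i ≥ 1` and `V_0` is
perpendicular to `V_1`. -/
theorem filtration_isotropic (p q : ℕ) (r : ℕ) (hr : 1 ≤ r)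
    (A : ℕ → Matrix (Fin (p + q)) (Fin (p + q)) ℂ) (hA0 : A 0 = 1)
    (hreal : ∀ k : ℕ, 1 ≤ k → ∀ v w : Fin (p + q) → ℂ,
      (∑ i ∈ Finset.range (r + 1), ∑ j ∈ Finset.range (r + 1),
        if i + j = k then herm p q ((A i).mulVec v) ((A j).mulVec w) else 0) = 0)
    (K : ℕ → Submodule ℂ (Fin (p + q) → ℂ))
    (hK : ∀ i, K i = ⨅ j ∈ Finset.Icc i r, LinearMap.ker (A j).mulVecLin)
    (V : ℕ → Submodule ℂ (Fin (p + q) → ℂ))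
    (hV : ∀ i, V i = ⨆ j ∈ Finset.Icc i r, (K (j + 1)).map (A j).mulVecLin) :
    (∀ j j' : ℕ, j ≤ r → j' ≤ r → 1 ≤ j + j' →
      ∀ u ∈ K (j + 1), ∀ u' ∈ K (j' + 1),
        herm p q ((A j).mulVec u) ((A j').mulVec u') = 0) ∧
    (∀ i : ℕ, 1 ≤ i → ∀ x ∈ V i, ∀ y ∈ V i, herm p q x y = 0) ∧
    (∀ x ∈ V 0, ∀ y ∈ V 1, herm p q x y = 0) :=
  filtration_isotropic_general p q r A hreal K hK V hV
end
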